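/- arXiv:2403.10734 — 7 statements merged into one kernel-verified Lean document; each statement's English description precedes it below -/
import Mathlib

section
/- Let E be a real normed vector space and let v₁, v₂ ∈ E be unit vectors with v₁ ≠ v₂. Let γ₁, γ₂ be curves defined for small t ≥ 0 with γᵢ(0) = 0 and γᵢ(t) = t·vᵢ + gᵢ(t) where ‖gᵢ(t)‖/t → 0 as t → 0⁺ (i = 1, 2). Then there exist constants c > 0 and δ > 0 such that for all s, t ∈ [0, δ] one has ‖γ₁(s) − γ₂(t)‖ ≥ c·(s + t). -/
open Filter Set

private lemma sep_aux {E : Type*} [NormedAddCommGroup E] [NormedSpace ℝ E]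
    (v w : E) (hv : ‖v‖ = 1) (hw : ‖w‖ = 1) {s t : ℝ} (hs : 0 ≤ s) (hst : s ≤ t) :
    ‖v - w‖ / 8 * (s + t) ≤ ‖s • v - t • w‖ := by
  set d := ‖v - w‖ with hd
  have hd2 : d ≤ 2 := by
    have := norm_sub_le v w
    rw [hv, hw] at this; linarith
  have ht : 0 ≤ t := le_trans hs hst
  have hA : t - s ≤ ‖s • v - t • w‖ := by
    have h := norm_sub_norm_le (t • w) (s • v)
    rw [norm_sub_rev] at h
    rw [norm_smul, norm_smul, hv, hw, Real.norm_eq_abs, Real.norm_eq_abs,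
      abs_of_nonneg ht, abs_of_nonneg hs] at h
    linarith
  have hB : s * d - (t - s) ≤ ‖s • v - t • w‖ := by
    have h1 : s • v - t • w = s • (v - w) - (t - s) • w := by
      rw [smul_sub, sub_smul]; abel
    rw [h1]
    have h := norm_sub_norm_le (s • (v - w)) ((t - s) • w)
    rw [norm_smul, norm_smul, hw, Real.norm_eq_abs, Real.norm_eq_abs, abs_of_nonneg hs,
      abs_of_nonneg (sub_nonneg.2 hst)] at h
    linarith
  have hd0 : 0 ≤ d := norm_nonneg _
  nlinarith [mul_le_mul_of_nonneg_right hd2 (sub_nonneg.2 hst), norm_nonneg (s • v - t • w)]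

private lemma sep_main {E : Type*} [NormedAddCommGroup E] [NormedSpace ℝ E]
    (v w : E) (hv : ‖v‖ = 1) (hw : ‖w‖ = 1) {s t : ℝ} (hs : 0 ≤ s) (ht : 0 ≤ t) :
    ‖v - w‖ / 8 * (s + t) ≤ ‖s • v - t • w‖ := by
  rcases le_total s t with h | h
  · exact sep_aux v w hv hw hs h
  · have := sep_aux w v hw hv ht h
    rw [norm_sub_rev w v, norm_sub_rev (t • w)] at this
    linarith

/-- Quantitative separation: if two curves emanating from `0` have distinct unit tangent
vectors `v₁ ≠ v₂`, then `‖γ₁(s) - γ₂(t)‖ ≥ c (s + t)` for some `c > 0` and all small `s, t ≥ 0`. -/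
theorem separation_of_distinct_tangents
    {E : Type*} [NormedAddCommGroup E] [NormedSpace ℝ E]
    (v₁ v₂ : E) (hv₁ : ‖v₁‖ = 1) (hv₂ : ‖v₂‖ = 1) (hne : v₁ ≠ v₂)
    (ε : ℝ) (hε : 0 < ε) (γ₁ γ₂ g₁ g₂ : ℝ → E)
    (h₁0 : γ₁ 0 = 0) (h₂0 : γ₂ 0 = 0)
    (h₁ : ∀ t ∈ Set.Ico (0 : ℝ) ε, γ₁ t = t • v₁ + g₁ t)
    (h₂ : ∀ t ∈ Set.Ico (0 : ℝ) ε, γ₂ t = t • v₂ + g₂ t)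
    (hg₁ : Tendsto (fun t => ‖g₁ t‖ / t) (nhdsWithin 0 (Set.Ioi 0)) (nhds 0))
    (hg₂ : Tendsto (fun t => ‖g₂ t‖ / t) (nhdsWithin 0 (Set.Ioi 0)) (nhds 0)) :
    ∃ c : ℝ, 0 < c ∧ ∃ δ : ℝ, 0 < δ ∧ δ < ε ∧
      ∀ s ∈ Set.Icc (0 : ℝ) δ, ∀ t ∈ Set.Icc (0 : ℝ) δ,
        c * (s + t) ≤ ‖γ₁ s - γ₂ t‖ := by
  set d := ‖v₁ - v₂‖ with hd
  have hd0 : 0 < d := by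
    rw [hd, norm_pos_iff, sub_ne_zero]; exact hne
  have hc : 0 < d / 16 := by linarith
  -- g₁ 0 = 0, g₂ 0 = 0
  have hg10 : g₁ 0 = 0 := by
    have := h₁ 0 ⟨le_refl _, hε⟩
    rw [h₁0, zero_smul, zero_add] at this; exact this.symm
  have hg20 : g₂ 0 = 0 := by
    have := h₂ 0 ⟨le_refl _, hε⟩
    rw [h₂0, zero_smul, zero_add] at this; exact this.symm
  obtain ⟨δ₁, hδ₁0, hδ₁⟩ := Metric.tendsto_nhdsWithin_nhds.mp hg₁ (d / 16) hc
  obtain ⟨δ₂, hδ₂0, hδ₂⟩ := Metric.tendsto_nhdsWithin_nhds.mp hg₂ (d / 16) hc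
  set δ : ℝ := min (min (δ₁ / 2) (δ₂ / 2)) (ε / 2) with hδdef
  have hδ0 : 0 < δ := lt_min (lt_min (by linarith) (by linarith)) (by linarith)
  refine ⟨d / 16, hc, δ, hδ0, ?_, ?_⟩
  · calc δ ≤ ε / 2 := min_le_right _ _
      _ < ε := by linarith
  intro s hs t ht
  have hsε : s < ε := lt_of_le_of_lt hs.2 (lt_of_le_of_lt (min_le_right _ _) (by linarith))
  have htε : t < ε := lt_of_le_of_lt ht.2 (lt_of_le_of_lt (min_le_right _ _) (by linarith))
  have hb1 : ‖g₁ s‖ ≤ d / 16 * s := by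
    rcases eq_or_lt_of_le hs.1 with h | h
    · rw [← h, hg10, norm_zero, mul_zero]
    · have hsδ₁ : dist s 0 < δ₁ := by
        rw [Real.dist_eq, sub_zero, abs_of_pos h]
        have : δ ≤ δ₁ / 2 := le_trans (min_le_left _ _) (min_le_left _ _)
        linarith [hs.2]
      have := hδ₁ h hsδ₁
      rw [Real.dist_eq, sub_zero, abs_of_nonneg (by positivity)] at this
      rw [div_lt_iff₀ h] at this
      nlinarith
  have hb2 : ‖g₂ t‖ ≤ d / 16 * t := by
    rcases eq_or_lt_of_le ht.1 with h | h
    · rw [← h, hg20, norm_zero, mul_zero]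
    · have htδ₂ : dist t 0 < δ₂ := by
        rw [Real.dist_eq, sub_zero, abs_of_pos h]
        have : δ ≤ δ₂ / 2 := le_trans (min_le_left _ _) (min_le_right _ _)
        linarith [ht.2]
      have := hδ₂ h htδ₂
      rw [Real.dist_eq, sub_zero, abs_of_nonneg (by positivity)] at this
      rw [div_lt_iff₀ h] at this
      nlinarith
  have hmain := sep_main v₁ v₂ hv₁ hv₂ hs.1 ht.1
  rw [h₁ s ⟨hs.1, hsε⟩, h₂ t ⟨ht.1, htε⟩]
  have heq : s • v₁ + g₁ s - (t • v₂ + g₂ t) = (s • v₁ - t • v₂) + (g₁ s - g₂ t) := by abel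
  rw [heq]
  have htri : ‖s • v₁ - t • v₂‖ - ‖g₁ s - g₂ t‖ ≤ ‖(s • v₁ - t • v₂) + (g₁ s - g₂ t)‖ := by
    have := norm_le_add_norm_add (s • v₁ - t • v₂) (g₁ s - g₂ t)
    linarith
  have htri2 : ‖g₁ s - g₂ t‖ ≤ ‖g₁ s‖ + ‖g₂ t‖ := norm_sub_le _ _
  rw [← hd] at hmain
  linarith
end

section
/- Let E be a real normed vector space, let A, B ⊆ E be closed sets with A ∩ B = {p}, let x ∈ A with x ≠ p and y ∈ B with y ≠ p, and let γ : [0,1] → E be a continuous path with image contained in A ∪ B, γ(0) = x and γ(1) = y. Then there exists t ∈ [0,1] with γ(t) = p, and the length (total variation, eVariationOn γ over [0,1]) of γ is at least ‖x − p‖ + ‖p − y‖. -/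
open Set

theorem eVariationOn.edist_add_edist_le_Icc {α E : Type*} [LinearOrder α]
    [PseudoEMetricSpace E] (f : α → E) {a t b : α} (hat : a ≤ t) (htb : t ≤ b) :
    edist (f a) (f t) + edist (f t) (f b) ≤ eVariationOn f (Icc a b) :=
  calc edist (f a) (f t) + edist (f t) (f b)
      ≤ eVariationOn f (Icc a t) + eVariationOn f (Icc t b) :=
        add_le_add (edist_le f (left_mem_Icc.2 hat) (right_mem_Icc.2 hat))
          (edist_le f (left_mem_Icc.2 htb) (right_mem_Icc.2 htb))
    _ ≤ eVariationOn f (Icc a t ∪ Icc t b) :=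
        add_le_union f fun _ hu _ hv ↦ hu.2.trans hv.1
    _ = eVariationOn f (Icc a b) := by rw [Icc_union_Icc_eq_Icc hat htb]

theorem path_through_intersection_length_bound_general
    {E : Type*} [NormedAddCommGroup E]
    (A B : Set E) (hA : IsClosed A) (hB : IsClosed B) (p : E) (hAB : A ∩ B = {p})
    (x y : E) (hx : x ∈ A) (hy : y ∈ B)
    (γ : ℝ → E) (hcont : ContinuousOn γ (Set.Icc 0 1))
    (him : γ '' Set.Icc 0 1 ⊆ A ∪ B) (h0 : γ 0 = x) (h1 : γ 1 = y) :
    (∃ t ∈ Set.Icc (0 : ℝ) 1, γ t = p) ∧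
      ENNReal.ofReal (‖x - p‖ + ‖p - y‖) ≤ eVariationOn γ (Set.Icc 0 1) := by
  obtain ⟨_, ⟨t, ht, rfl⟩, htA, htB⟩ :=
    isPreconnected_closed_iff.1 (isPreconnected_Icc.image γ hcont) A B hA hB him
      ⟨x, ⟨0, left_mem_Icc.2 zero_le_one, h0⟩, hx⟩
      ⟨y, ⟨1, right_mem_Icc.2 zero_le_one, h1⟩, hy⟩
  have htp : γ t = p := mem_singleton_iff.1 (hAB ▸ ⟨htA, htB⟩)
  refine ⟨⟨t, ht, htp⟩, ?_⟩
  calc ENNReal.ofReal (‖x - p‖ + ‖p - y‖)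
      = edist (γ 0) (γ t) + edist (γ t) (γ 1) := by
        rw [ENNReal.ofReal_add (norm_nonneg _) (norm_nonneg _), ofReal_norm,
          ofReal_norm, h0, h1, htp, edist_eq_enorm_sub, edist_eq_enorm_sub]
    _ ≤ eVariationOn γ (Icc 0 1) := eVariationOn.edist_add_edist_le_Icc γ ht.1 ht.2

/-- If `A`, `B` are closed sets with `A ∩ B = {p}` and `γ` is a continuous path in `A ∪ B`
from a point `x ∈ A \ {p}` to a point `y ∈ B \ {p}`, then `γ` passes through `p` and its
length (total variation) is at least `‖x - p‖ + ‖p - y‖`. -/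
theorem path_through_intersection_length_bound
    {E : Type*} [NormedAddCommGroup E] [NormedSpace ℝ E]
    (A B : Set E) (hA : IsClosed A) (hB : IsClosed B) (p : E) (hAB : A ∩ B = {p})
    (x y : E) (hx : x ∈ A) (hxp : x ≠ p) (hy : y ∈ B) (hyp : y ≠ p)
    (γ : ℝ → E) (hcont : ContinuousOn γ (Set.Icc 0 1))
    (him : γ '' Set.Icc 0 1 ⊆ A ∪ B) (h0 : γ 0 = x) (h1 : γ 1 = y) :
    (∃ t ∈ Set.Icc (0 : ℝ) 1, γ t = p) ∧
      ENNReal.ofReal (‖x - p‖ + ‖p - y‖) ≤ eVariationOn γ (Set.Icc 0 1) :=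
  path_through_intersection_length_bound_general A B hA hB p hAB x y hx hy γ hcont him h0 h1
end

section
/- Let E be a real normed vector space, K > 0, a > 0, and let γ : [0, a] → E be a K-Lipschitz curve parametrized by the distance, i.e. ‖γ(t)‖ = t for all t ∈ [0, a]. Then for all 0 ≤ s ≤ t ≤ a, the length of γ restricted to [s, t] (total variation eVariationOn γ over [s,t]) is at most K·(t − s), and t − s ≤ ‖γ(s) − γ(t)‖; consequently the inner (length) distance between γ(s) and γ(t) within the image of γ is at most K·‖γ(s) − γ(t)‖, i.e. the image of γ is Lipschitz normally embedded with constant K. -/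
open Filter Set

/-- The inner (length) distance between `x` and `y` inside `X` : the infimum of the lengths
(total variations) of continuous paths `γ : [0,1] → E` with image in `X` joining `x` to `y`. -/
noncomputable def innerDist {E : Type*} [NormedAddCommGroup E] [NormedSpace ℝ E]
    (X : Set E) (x y : E) : ENNReal :=
  ⨅ (γ : ℝ → E) (_ : ContinuousOn γ (Set.Icc 0 1)) (_ : γ '' Set.Icc 0 1 ⊆ X)
    (_ : γ 0 = x) (_ : γ 1 = y), eVariationOn γ (Set.Icc 0 1)

/-!
A `K`-Lipschitz curve has length at most `K (t - s)` on `[s, t]`, and its restriction to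
`[s, t]`, reparametrized affinely over `[0, 1]`, is a path in the image joining `γ s` to `γ t`.
Since `‖γ u‖ = u`, the reverse triangle inequality gives `t - s ≤ ‖γ s - γ t‖`, so this path
has length at most `K ‖γ s - γ t‖`.
-/

theorem LipschitzOnWith.eVariationOn_Icc_le {E : Type*} [PseudoEMetricSpace E] {f : ℝ → E}
    {K : NNReal} {a b : ℝ} (hf : LipschitzOnWith K f (Icc a b)) :
    eVariationOn f (Icc a b) ≤ K * ENNReal.ofReal (b - a) := by
  simpa using hf.comp_eVariationOn_le (mapsTo_id _)

theorem innerDist_le_eVariationOn {E : Type*} [NormedAddCommGroup E] [NormedSpace ℝ E]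
    {X : Set E} {f : ℝ → E} {s t : ℝ} (hst : s ≤ t) (hf : ContinuousOn f (Icc s t))
    (hX : f '' Icc s t ⊆ X) :
    innerDist X (f s) (f t) ≤ eVariationOn f (Icc s t) := by
  set φ : ℝ →ᵃ[ℝ] ℝ := AffineMap.lineMap s t
  have hφ : φ '' Icc 0 1 = Icc s t := by
    rw [← segment_eq_image_lineMap, segment_eq_Icc hst]
  have hcont : ContinuousOn (f ∘ φ) (Icc 0 1) :=
    hf.comp AffineMap.lineMap_continuous.continuousOn (hφ ▸ mapsTo_image _ _)
  have himage : (f ∘ φ) '' Icc 0 1 ⊆ X := by rwa [image_comp, hφ]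
  calc innerDist X (f s) (f t) ≤ eVariationOn (f ∘ φ) (Icc 0 1) :=
        iInf_le_of_le (f ∘ φ) <| iInf_le_of_le hcont <| iInf_le_of_le himage <|
          iInf_le_of_le (by simp [φ]) <| iInf_le_of_le (by simp [φ]) le_rfl
    _ = eVariationOn f (Icc s t) := by
        rw [eVariationOn.comp_eq_of_monotoneOn _ _ ((AffineMap.lineMap_mono hst).monotoneOn _), hφ]

theorem lne_of_parametrized_by_distance_general
    {E : Type*} [NormedAddCommGroup E] [NormedSpace ℝ E]
    (K a : ℝ) (γ : ℝ → E)
    (hlip : LipschitzOnWith (Real.toNNReal K) γ (Set.Icc 0 a))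
    (hdist : ∀ t ∈ Set.Icc (0 : ℝ) a, ‖γ t‖ = t) :
    ∀ s t : ℝ, 0 ≤ s → s ≤ t → t ≤ a →
      eVariationOn γ (Set.Icc s t) ≤ ENNReal.ofReal (K * (t - s)) ∧
      t - s ≤ ‖γ s - γ t‖ ∧
      innerDist (γ '' Set.Icc 0 a) (γ s) (γ t) ≤ ENNReal.ofReal (K * ‖γ s - γ t‖) := by
  intro s t hs hst hta
  have hsub : Icc s t ⊆ Icc 0 a := Icc_subset_Icc hs hta
  have hlen : eVariationOn γ (Icc s t) ≤ ENNReal.ofReal K * ENNReal.ofReal (t - s) :=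
    (hlip.mono hsub).eVariationOn_Icc_le
  have hgap : t - s ≤ ‖γ s - γ t‖ :=
    calc t - s = ‖γ t‖ - ‖γ s‖ := by
          rw [hdist t ⟨hs.trans hst, hta⟩, hdist s ⟨hs, hst.trans hta⟩]
      _ ≤ ‖γ s - γ t‖ := norm_sub_rev (γ t) (γ s) ▸ norm_sub_norm_le _ _
  refine ⟨by rwa [ENNReal.ofReal_mul' (sub_nonneg.2 hst)], hgap, ?_⟩
  calc innerDist (γ '' Icc 0 a) (γ s) (γ t) ≤ eVariationOn γ (Icc s t) :=
        innerDist_le_eVariationOn hst (hlip.mono hsub).continuousOn (image_mono hsub)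
    _ ≤ ENNReal.ofReal K * ENNReal.ofReal ‖γ s - γ t‖ := hlen.trans (by gcongr)
    _ = ENNReal.ofReal (K * ‖γ s - γ t‖) := (ENNReal.ofReal_mul' (norm_nonneg _)).symm

/-- A `K`-Lipschitz curve parametrized by the distance (`‖γ(t)‖ = t`) has, for `s ≤ t`,
length over `[s,t]` at most `K (t - s)`, satisfies `t - s ≤ ‖γ(s) - γ(t)‖`, and hence its
image is Lipschitz normally embedded with constant `K`. -/
theorem lne_of_parametrized_by_distance
    {E : Type*} [NormedAddCommGroup E] [NormedSpace ℝ E]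
    (K a : ℝ) (hK : 0 < K) (ha : 0 < a) (γ : ℝ → E)
    (hlip : LipschitzOnWith (Real.toNNReal K) γ (Set.Icc 0 a))
    (hdist : ∀ t ∈ Set.Icc (0 : ℝ) a, ‖γ t‖ = t) :
    ∀ s t : ℝ, 0 ≤ s → s ≤ t → t ≤ a →
      eVariationOn γ (Set.Icc s t) ≤ ENNReal.ofReal (K * (t - s)) ∧
      t - s ≤ ‖γ s - γ t‖ ∧
      innerDist (γ '' Set.Icc 0 a) (γ s) (γ t) ≤ ENNReal.ofReal (K * ‖γ s - γ t‖) :=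
  lne_of_parametrized_by_distance_general K a γ hlip hdist
end

section
/- Let E be a real normed vector space, let v ∈ E be a unit vector, let ε > 0, and let γ₁, γ₂ : [0, ε) → E be continuous curves with γᵢ(0) = 0, ‖γᵢ(t)‖ = t for all t, γᵢ(t)/t → v as t → 0⁺ for both i = 1, 2 (the same tangent direction), and suppose the images of γ₁ and γ₂ intersect only at 0. Let X be the union of the images of γ₁ and γ₂. Then the germ of X at 0 is not Lipschitz normally embedded: for every C > 0 and every δ > 0 there exists t ∈ (0, δ) such that every continuous path in X joining γ₁(t) to γ₂(t) has length (total variation) strictly greater than C·‖γ₁(t) − γ₂(t)‖. -/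
open Filter Set Topology Metric Asymptotics

/-!
A path in the union of the two branches from `γ₁ t` to `γ₂ t` must pass through `0`: each branch
is closed in the ball of radius `ε`, the branches meet only at `0`, and the image of the path is
connected. Hence its length is at least `‖γ₁ t‖ + ‖γ₂ t‖ = 2t`, whereas the common tangent makes
`‖γ₁ t - γ₂ t‖ = o(t)`.
-/

theorem IsPreconnected.mem_of_inter_eq_singleton {X : Type*} [TopologicalSpace X]
    {S A B : Set X} {p x y : X} (hS : IsPreconnected S) (hSAB : S ⊆ A ∪ B)
    (hA : closure A ∩ S ⊆ A) (hB : closure B ∩ S ⊆ B) (hAB : A ∩ B = {p})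
    (hx : x ∈ S ∩ A) (hy : y ∈ S ∩ B) : p ∈ S := by
  have eq_p {z : X} (hzA : z ∈ A) (hzB : z ∈ B) : z = p := by
    have hz : z ∈ A ∩ B := ⟨hzA, hzB⟩
    rwa [hAB] at hz
  by_contra hp
  have hdisj : S ∩ (closure A ∩ closure B) = ∅ :=
    eq_empty_of_forall_notMem fun z ⟨hzS, hzA, hzB⟩ =>
      hp (eq_p (hA ⟨hzA, hzS⟩) (hB ⟨hzB, hzS⟩) ▸ hzS)
  rcases isPreconnected_iff_subset_of_disjoint_closed.mp hS _ _ isClosed_closure isClosed_closure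
      (hSAB.trans (union_subset_union subset_closure subset_closure)) hdisj with hSA | hSB
  · exact hp (eq_p (hA ⟨hSA hy.1, hy.1⟩) hy.2 ▸ hy.1)
  · exact hp (eq_p hx.2 (hB ⟨hSB hx.1, hx.1⟩) ▸ hx.1)

theorem edist_add_edist_le_eVariationOn_Icc {α E : Type*} [LinearOrder α]
    [PseudoEMetricSpace E] (f : α → E) {a b c : α} (hab : a ≤ b) (hbc : b ≤ c) :
    edist (f a) (f b) + edist (f b) (f c) ≤ eVariationOn f (Icc a c) := by
  have hsplit := eVariationOn.Icc_add_Icc f hab hbc (mem_univ b)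
  simp only [univ_inter] at hsplit
  rw [← hsplit]
  exact add_le_add
    (eVariationOn.edist_le f (left_mem_Icc.2 hab) (right_mem_Icc.2 hab))
    (eVariationOn.edist_le f (left_mem_Icc.2 hbc) (right_mem_Icc.2 hbc))

theorem isLittleO_sub_of_tendsto_inv_smul {E : Type*} [NormedAddCommGroup E] [NormedSpace ℝ E]
    {f g : ℝ → E} {v : E} (hf : Tendsto (fun t => t⁻¹ • f t) (𝓝[>] 0) (𝓝 v))
    (hg : Tendsto (fun t => t⁻¹ • g t) (𝓝[>] 0) (𝓝 v)) :
    (fun t => f t - g t) =o[𝓝[>] 0] id := by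
  have hpos : ∀ᶠ t in 𝓝[>] (0 : ℝ), id t = 0 → f t - g t = 0 :=
    eventually_mem_nhdsWithin.mono fun t (ht : 0 < t) h0 => absurd h0 ht.ne'
  rw [← isLittleOTVS_iff_isLittleO (𝕜 := ℝ), isLittleOTVS_iff_tendsto_inv_smul hpos]
  simpa [smul_sub] using hf.sub hg

section DistanceParametrizedCurve

variable {E : Type*} [NormedAddCommGroup E] {ε : ℝ} {γ : ℝ → E}

theorem image_Ico_subset_ball (hn : ∀ t ∈ Ico (0 : ℝ) ε, ‖γ t‖ = t) :
    γ '' Ico 0 ε ⊆ ball 0 ε := by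
  rintro _ ⟨t, ht, rfl⟩
  rw [mem_ball_zero_iff, hn t ht]
  exact ht.2

/-- The branch is closed in the ball because `x ↦ γ ‖x‖` is continuous there and fixes it. -/
theorem closure_image_Ico_inter_ball_subset (hc : ContinuousOn γ (Ico 0 ε))
    (hn : ∀ t ∈ Ico (0 : ℝ) ε, ‖γ t‖ = t) :
    closure (γ '' Ico 0 ε) ∩ ball 0 ε ⊆ γ '' Ico 0 ε := by
  have norm_mem {x : E} (hx : x ∈ ball 0 ε) : ‖x‖ ∈ Ico 0 ε :=
    ⟨norm_nonneg x, mem_ball_zero_iff.mp hx⟩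
  have hfix : EqOn id (γ ∘ norm) (γ '' Ico 0 ε) := by
    rintro _ ⟨t, ht, rfl⟩
    simp [hn t ht]
  have hcont : ContinuousOn (γ ∘ norm) (ball (0 : E) ε) :=
    hc.comp continuous_norm.continuousOn fun _ => norm_mem
  rintro y ⟨hycl, hyball⟩
  have hy : y = γ ‖y‖ :=
    hfix.of_subset_closure continuousOn_id (hcont.mono inter_subset_left)
      (fun z hz => ⟨image_Ico_subset_ball hn hz, subset_closure hz⟩) inter_subset_right
      ⟨hyball, hycl⟩
  exact ⟨‖y‖, norm_mem hyball, hy.symm⟩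

end DistanceParametrizedCurve

theorem not_lne_of_common_tangent_general
    {E : Type*} [NormedAddCommGroup E] [NormedSpace ℝ E]
    (v : E) (ε : ℝ) (hε : 0 < ε) (γ₁ γ₂ : ℝ → E)
    (hc₁ : ContinuousOn γ₁ (Set.Ico 0 ε)) (hc₂ : ContinuousOn γ₂ (Set.Ico 0 ε))
    (hn₁ : ∀ t ∈ Set.Ico (0 : ℝ) ε, ‖γ₁ t‖ = t)
    (hn₂ : ∀ t ∈ Set.Ico (0 : ℝ) ε, ‖γ₂ t‖ = t)
    (ht₁ : Tendsto (fun t => t⁻¹ • γ₁ t) (nhdsWithin 0 (Set.Ioi 0)) (nhds v))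
    (ht₂ : Tendsto (fun t => t⁻¹ • γ₂ t) (nhdsWithin 0 (Set.Ioi 0)) (nhds v))
    (hint : γ₁ '' Set.Ico 0 ε ∩ γ₂ '' Set.Ico 0 ε = {0}) :
    ∀ C : ℝ, 0 < C → ∀ δ : ℝ, 0 < δ → ∃ t : ℝ, 0 < t ∧ t < δ ∧ t < ε ∧
      ∀ σ : ℝ → E, ContinuousOn σ (Set.Icc 0 1) →
        σ '' Set.Icc 0 1 ⊆ γ₁ '' Set.Ico 0 ε ∪ γ₂ '' Set.Ico 0 ε →
        σ 0 = γ₁ t → σ 1 = γ₂ t →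
        ENNReal.ofReal (C * ‖γ₁ t - γ₂ t‖) < eVariationOn σ (Set.Icc 0 1) := by
  intro C hC δ hδ
  obtain ⟨t, hclose, ht0, htδε⟩ := (((isLittleO_sub_of_tendsto_inv_smul ht₁ ht₂).def
    (inv_pos.2 hC)).and (Ioo_mem_nhdsGT (lt_min hδ hε))).exists
  have htε : t ∈ Ico 0 ε := ⟨ht0.le, htδε.trans_le (min_le_right _ _)⟩
  refine ⟨t, ht0, htδε.trans_le (min_le_left _ _), htε.2, fun σ hσ hσX hσ0 hσ1 => ?_⟩
  have hS : σ '' Icc 0 1 ⊆ ball 0 ε :=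
    hσX.trans (union_subset (image_Ico_subset_ball hn₁) (image_Ico_subset_ball hn₂))
  obtain ⟨s, hs, hσs⟩ : (0 : E) ∈ σ '' Icc 0 1 :=
    (isPreconnected_Icc.image σ hσ).mem_of_inter_eq_singleton hσX
      ((inter_subset_inter_right _ hS).trans (closure_image_Ico_inter_ball_subset hc₁ hn₁))
      ((inter_subset_inter_right _ hS).trans (closure_image_Ico_inter_ball_subset hc₂ hn₂)) hint
      ⟨⟨0, left_mem_Icc.2 zero_le_one, hσ0⟩, t, htε, rfl⟩
      ⟨⟨1, right_mem_Icc.2 zero_le_one, hσ1⟩, t, htε, rfl⟩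
  have hCt : C * ‖γ₁ t - γ₂ t‖ ≤ t := by
    rw [id, Real.norm_of_nonneg ht0.le] at hclose
    calc C * ‖γ₁ t - γ₂ t‖ ≤ C * (C⁻¹ * t) := by gcongr
      _ = t := by field_simp
  calc ENNReal.ofReal (C * ‖γ₁ t - γ₂ t‖) < ENNReal.ofReal (t + t) :=
        (ENNReal.ofReal_lt_ofReal_iff (by positivity)).2 (by linarith)
    _ = edist (σ 0) (σ s) + edist (σ s) (σ 1) := by
        rw [hσ0, hσs, hσ1, edist_zero_right, edist_comm, edist_zero_right, ← ofReal_norm, ← ofReal_norm,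
          hn₁ t htε, hn₂ t htε, ENNReal.ofReal_add ht0.le ht0.le]
    _ ≤ eVariationOn σ (Icc 0 1) := edist_add_edist_le_eVariationOn_Icc σ hs.1 hs.2

/-- Two curve branches parametrized by the distance, sharing the same unit tangent direction
`v` at `0` and meeting only at `0`, form a germ which is not Lipschitz normally embedded:
for every `C > 0` and `δ > 0` there is `t ∈ (0, δ)` such that every continuous path in the
union joining `γ₁(t)` to `γ₂(t)` has length strictly greater than `C ‖γ₁(t) - γ₂(t)‖`. -/
theorem not_lne_of_common_tangent
    {E : Type*} [NormedAddCommGroup E] [NormedSpace ℝ E]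
    (v : E) (hv : ‖v‖ = 1) (ε : ℝ) (hε : 0 < ε) (γ₁ γ₂ : ℝ → E)
    (hc₁ : ContinuousOn γ₁ (Set.Ico 0 ε)) (hc₂ : ContinuousOn γ₂ (Set.Ico 0 ε))
    (h₁0 : γ₁ 0 = 0) (h₂0 : γ₂ 0 = 0)
    (hn₁ : ∀ t ∈ Set.Ico (0 : ℝ) ε, ‖γ₁ t‖ = t)
    (hn₂ : ∀ t ∈ Set.Ico (0 : ℝ) ε, ‖γ₂ t‖ = t)
    (ht₁ : Tendsto (fun t => t⁻¹ • γ₁ t) (nhdsWithin 0 (Set.Ioi 0)) (nhds v))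
    (ht₂ : Tendsto (fun t => t⁻¹ • γ₂ t) (nhdsWithin 0 (Set.Ioi 0)) (nhds v))
    (hint : γ₁ '' Set.Ico 0 ε ∩ γ₂ '' Set.Ico 0 ε = {0}) :
    ∀ C : ℝ, 0 < C → ∀ δ : ℝ, 0 < δ → ∃ t : ℝ, 0 < t ∧ t < δ ∧ t < ε ∧
      ∀ σ : ℝ → E, ContinuousOn σ (Set.Icc 0 1) →
        σ '' Set.Icc 0 1 ⊆ γ₁ '' Set.Ico 0 ε ∪ γ₂ '' Set.Ico 0 ε →
        σ 0 = γ₁ t → σ 1 = γ₂ t →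
        ENNReal.ofReal (C * ‖γ₁ t - γ₂ t‖) < eVariationOn σ (Set.Icc 0 1) :=
  not_lne_of_common_tangent_general v ε hε γ₁ γ₂ hc₁ hc₂ hn₁ hn₂ ht₁ ht₂ hint
end

section
/- Let E be a real normed vector space, let v₁, v₂ ∈ E, let ε > 0, and let γ₁, γ₂ : [0, ε) → E be Lipschitz curves with γᵢ(0) = 0, ‖γᵢ(t)‖ = t for all t ∈ [0, ε), γᵢ(t)/t → vᵢ as t → 0⁺, and suppose the images of γ₁ and γ₂ intersect only at 0. Let X be the union of the images of γ₁ and γ₂. Then the germ of X at 0 is Lipschitz normally embedded if and only if v₁ ≠ v₂ (i.e. if and only if the tangent half-lines ℝ₊v₁ and ℝ₊v₂ of the two branches at 0 are distinct). -/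
open Filter Set

section Aux

set_option linter.unusedSectionVars false
set_option linter.unusedVariables false

variable {E : Type*} [NormedAddCommGroup E] [NormedSpace ℝ E]

lemma innerDist_le_path (X : Set E) {x y : E} (p : ℝ → E)
    (hc : ContinuousOn p (Set.Icc 0 1)) (him : p '' Set.Icc 0 1 ⊆ X)
    (h0 : p 0 = x) (h1 : p 1 = y) :
    innerDist X x y ≤ eVariationOn p (Set.Icc 0 1) := by
  unfold innerDist
  refine iInf_le_of_le p ?_
  refine iInf_le_of_le hc ?_
  refine iInf_le_of_le him ?_
  refine iInf_le_of_le h0 ?_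
  exact iInf_le _ h1

lemma evar_le_of_lip {f : ℝ → E} {K : NNReal} {a b : ℝ} (hab : a ≤ b)
    (h : LipschitzOnWith K f (Set.Icc a b)) :
    eVariationOn f (Set.Icc a b) ≤ ENNReal.ofReal ((K : ℝ) * (b - a)) := by
  have h1 : eVariationOn (f ∘ id) (Set.Icc a b) ≤ (K : ENNReal) * eVariationOn id (Set.Icc a b) :=
    h.comp_eVariationOn_le (mapsTo_id _)
  have hm : MonotoneOn (id : ℝ → ℝ) (Set.Icc a b) := fun x _ y _ hxy => hxy
  have h2 : eVariationOn (id : ℝ → ℝ) (Set.Icc a b) ≤ ENNReal.ofReal (b - a) := by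
    have := hm.eVariationOn_le (Set.left_mem_Icc.2 hab) (Set.right_mem_Icc.2 hab)
    simpa using this
  calc eVariationOn f (Set.Icc a b) = eVariationOn (f ∘ id) (Set.Icc a b) := rfl
    _ ≤ (K : ENNReal) * eVariationOn id (Set.Icc a b) := h1
    _ ≤ (K : ENNReal) * ENNReal.ofReal (b - a) := mul_le_mul_right h2 _
    _ = ENNReal.ofReal ((K : ℝ) * (b - a)) := by
        rw [ENNReal.ofReal_mul K.coe_nonneg, ENNReal.ofReal_coe_nnreal]

lemma innerDist_same (X : Set E) {ε : ℝ} {γ : ℝ → E} {K : NNReal}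
    (hl : LipschitzOnWith K γ (Set.Ico 0 ε))
    (hA : γ '' Set.Ico 0 ε ⊆ X) {s t : ℝ} (hs : s ∈ Set.Ico (0:ℝ) ε)
    (ht : t ∈ Set.Ico (0:ℝ) ε) :
    innerDist X (γ s) (γ t) ≤ ENNReal.ofReal ((K : ℝ) * |t - s|) := by
  set g : ℝ → ℝ := fun u => s + u * (t - s) with hg
  have hgmem : ∀ u ∈ Set.Icc (0:ℝ) 1, g u ∈ Set.Icc (min s t) (max s t) := by
    intro u hu
    rcases le_total s t with h | h
    · rw [min_eq_left h, max_eq_right h]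
      refine ⟨?_, ?_⟩ <;> · simp only [hg]; nlinarith [hu.1, hu.2]
    · rw [min_eq_right h, max_eq_left h]
      refine ⟨?_, ?_⟩ <;> · simp only [hg]; nlinarith [hu.1, hu.2]
  have hsub : Set.Icc (min s t) (max s t) ⊆ Set.Ico 0 ε := by
    intro z hz
    constructor
    · exact le_trans (le_min hs.1 ht.1) hz.1
    · exact lt_of_le_of_lt hz.2 (max_lt hs.2 ht.2)
  have hgc : Continuous g := by fun_prop
  have hc : ContinuousOn (γ ∘ g) (Set.Icc 0 1) :=
    hl.continuousOn.comp hgc.continuousOn (fun u hu => hsub (hgmem u hu))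
  have him : (γ ∘ g) '' Set.Icc 0 1 ⊆ X := by
    rintro _ ⟨u, hu, rfl⟩
    exact hA ⟨g u, hsub (hgmem u hu), rfl⟩
  have h0 : (γ ∘ g) 0 = γ s := by simp [hg]
  have h1 : (γ ∘ g) 1 = γ t := by simp [hg]
  refine le_trans (innerDist_le_path X (γ ∘ g) hc him h0 h1) ?_
  have hvar : eVariationOn (γ ∘ g) (Set.Icc 0 1) ≤
      eVariationOn γ (Set.Icc (min s t) (max s t)) := by
    rcases le_total s t with h | h
    · refine eVariationOn.comp_le_of_monotoneOn γ g ?_ (fun u hu => hgmem u hu)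
      intro u hu u' hu' huu'
      simp only [hg]
      nlinarith
    · refine eVariationOn.comp_le_of_antitoneOn γ g ?_ (fun u hu => hgmem u hu)
      intro u hu u' hu' huu'
      simp only [hg]
      nlinarith
  refine le_trans hvar (le_trans (evar_le_of_lip min_le_max (hl.mono hsub)) ?_)
  apply ENNReal.ofReal_le_ofReal
  rw [max_sub_min_eq_abs, abs_sub_comm]

lemma innerDist_cross (X : Set E) {ε : ℝ} {γ₁ γ₂ : ℝ → E} {K₁ K₂ : NNReal}
    (hl₁ : LipschitzOnWith K₁ γ₁ (Set.Ico 0 ε)) (hl₂ : LipschitzOnWith K₂ γ₂ (Set.Ico 0 ε))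
    (h₁0 : γ₁ 0 = 0) (h₂0 : γ₂ 0 = 0)
    (hA : γ₁ '' Set.Ico 0 ε ⊆ X) (hB : γ₂ '' Set.Ico 0 ε ⊆ X)
    {s t : ℝ} (hs : s ∈ Set.Ico (0:ℝ) ε) (ht : t ∈ Set.Ico (0:ℝ) ε) :
    innerDist X (γ₁ s) (γ₂ t) ≤ ENNReal.ofReal ((K₁ : ℝ) * s + (K₂ : ℝ) * t) := by
  set g₁ : ℝ → ℝ := fun u => s * max (1 - 2 * u) 0 with hg₁
  set g₂ : ℝ → ℝ := fun u => t * max (2 * u - 1) 0 with hg₂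
  set p : ℝ → E := fun u => γ₁ (g₁ u) + γ₂ (g₂ u) with hp
  have hg₁mem : ∀ u ∈ Set.Icc (0:ℝ) 1, g₁ u ∈ Set.Icc 0 s := by
    intro u hu
    have h1 : (0:ℝ) ≤ max (1 - 2 * u) 0 := le_max_right _ _
    have h2 : max (1 - 2 * u) 0 ≤ 1 := max_le (by linarith [hu.1]) zero_le_one
    exact ⟨mul_nonneg hs.1 h1, by simp only [hg₁]; nlinarith [hs.1]⟩
  have hg₂mem : ∀ u ∈ Set.Icc (0:ℝ) 1, g₂ u ∈ Set.Icc 0 t := by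
    intro u hu
    have h1 : (0:ℝ) ≤ max (2 * u - 1) 0 := le_max_right _ _
    have h2 : max (2 * u - 1) 0 ≤ 1 := max_le (by linarith [hu.2]) zero_le_one
    exact ⟨mul_nonneg ht.1 h1, by simp only [hg₂]; nlinarith [ht.1]⟩
  have hsubs : Set.Icc (0:ℝ) s ⊆ Set.Ico 0 ε :=
    fun z hz => ⟨hz.1, lt_of_le_of_lt hz.2 hs.2⟩
  have hsubt : Set.Icc (0:ℝ) t ⊆ Set.Ico 0 ε :=
    fun z hz => ⟨hz.1, lt_of_le_of_lt hz.2 ht.2⟩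
  have hg₁c : Continuous g₁ := by fun_prop
  have hg₂c : Continuous g₂ := by fun_prop
  have hc : ContinuousOn p (Set.Icc 0 1) := by
    apply ContinuousOn.add
    · exact hl₁.continuousOn.comp hg₁c.continuousOn (fun u hu => hsubs (hg₁mem u hu))
    · exact hl₂.continuousOn.comp hg₂c.continuousOn (fun u hu => hsubt (hg₂mem u hu))
  have hg₂half : ∀ u : ℝ, u ≤ 2⁻¹ → g₂ u = 0 := by
    intro u hu
    simp only [hg₂]
    rw [max_eq_right (by linarith)]
    ring
  have hg₁half : ∀ u : ℝ, 2⁻¹ ≤ u → g₁ u = 0 := by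
    intro u hu
    simp only [hg₁]
    rw [max_eq_right (by linarith)]
    ring
  have him : p '' Set.Icc 0 1 ⊆ X := by
    rintro _ ⟨u, hu, rfl⟩
    rcases le_total u 2⁻¹ with h | h
    · have : p u = γ₁ (g₁ u) := by rw [hp]; simp [hg₂half u h, h₂0]
      rw [this]
      exact hA ⟨g₁ u, hsubs (hg₁mem u hu), rfl⟩
    · have : p u = γ₂ (g₂ u) := by rw [hp]; simp [hg₁half u h, h₁0]
      rw [this]
      exact hB ⟨g₂ u, hsubt (hg₂mem u hu), rfl⟩
  have h0 : p 0 = γ₁ s := by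
    simp only [hp, hg₁, hg₂]
    norm_num [h₂0]
  have h1 : p 1 = γ₂ t := by
    simp only [hp, hg₁, hg₂]
    norm_num [h₁0]
  refine le_trans (innerDist_le_path X p hc him h0 h1) ?_
  have hmem : (2⁻¹ : ℝ) ∈ Set.Icc (0:ℝ) 1 := by norm_num
  have hsplit := eVariationOn.Icc_add_Icc p (s := Set.Icc (0:ℝ) 1)
    (a := 0) (b := 2⁻¹) (c := 1) (by norm_num) (by norm_num) hmem
  have e1 : Set.Icc (0:ℝ) 1 ∩ Set.Icc 0 2⁻¹ = Set.Icc (0:ℝ) 2⁻¹ :=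
    Set.inter_eq_self_of_subset_right (Set.Icc_subset_Icc le_rfl (by norm_num))
  have e2 : Set.Icc (0:ℝ) 1 ∩ Set.Icc 2⁻¹ 1 = Set.Icc (2⁻¹:ℝ) 1 :=
    Set.inter_eq_self_of_subset_right (Set.Icc_subset_Icc (by norm_num) le_rfl)
  have e3 : Set.Icc (0:ℝ) 1 ∩ Set.Icc 0 1 = Set.Icc (0:ℝ) 1 := Set.inter_self _
  rw [e1, e2, e3] at hsplit
  rw [← hsplit]
  have hvar1 : eVariationOn p (Set.Icc 0 2⁻¹) ≤ ENNReal.ofReal ((K₁ : ℝ) * s) := by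
    have heq : Set.EqOn p (γ₁ ∘ g₁) (Set.Icc 0 2⁻¹) := by
      intro u hu
      simp only [hp, Function.comp]
      rw [hg₂half u hu.2, h₂0, add_zero]
    rw [eVariationOn.eq_of_eqOn heq]
    have hanti : AntitoneOn g₁ (Set.Icc (0:ℝ) 2⁻¹) := by
      intro u hu u' hu' huu'
      simp only [hg₁]
      have e1 : max (1 - 2*u) 0 = 1 - 2*u := max_eq_left (by linarith [hu.2])
      have e2 : max (1 - 2*u') 0 = 1 - 2*u' := max_eq_left (by linarith [hu'.2])
      rw [e1, e2]
      nlinarith [hs.1]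
    have hmt : Set.MapsTo g₁ (Set.Icc (0:ℝ) 2⁻¹) (Set.Icc 0 s) := by
      intro u hu
      exact hg₁mem u ⟨hu.1, le_trans hu.2 (by norm_num)⟩
    refine le_trans (eVariationOn.comp_le_of_antitoneOn γ₁ g₁ hanti hmt) ?_
    have := evar_le_of_lip hs.1 (hl₁.mono hsubs)
    simpa using this
  have hvar2 : eVariationOn p (Set.Icc 2⁻¹ 1) ≤ ENNReal.ofReal ((K₂ : ℝ) * t) := by
    have heq : Set.EqOn p (γ₂ ∘ g₂) (Set.Icc 2⁻¹ 1) := by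
      intro u hu
      simp only [hp, Function.comp]
      rw [hg₁half u hu.1, h₁0, zero_add]
    rw [eVariationOn.eq_of_eqOn heq]
    have hmono : MonotoneOn g₂ (Set.Icc (2⁻¹:ℝ) 1) := by
      intro u hu u' hu' huu'
      simp only [hg₂]
      have e1 : max (2*u - 1) 0 = 2*u - 1 := max_eq_left (by linarith [hu.1])
      have e2 : max (2*u' - 1) 0 = 2*u' - 1 := max_eq_left (by linarith [hu'.1])
      rw [e1, e2]
      nlinarith [ht.1]
    have hmt : Set.MapsTo g₂ (Set.Icc (2⁻¹:ℝ) 1) (Set.Icc 0 t) := by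
      intro u hu
      exact hg₂mem u ⟨le_trans (by norm_num) hu.1, hu.2⟩
    refine le_trans (eVariationOn.comp_le_of_monotoneOn γ₂ g₂ hmono hmt) ?_
    have := evar_le_of_lip ht.1 (hl₂.mono hsubt)
    simpa using this
  refine le_trans (add_le_add hvar1 hvar2) ?_
  rw [← ENNReal.ofReal_add (mul_nonneg K₁.coe_nonneg hs.1) (mul_nonneg K₂.coe_nonneg ht.1)]

lemma branch_closed {γ : ℝ → E} {K : NNReal} {ε : ℝ}
    (hl : LipschitzOnWith K γ (Set.Ico 0 ε))
    (hn : ∀ t ∈ Set.Ico (0 : ℝ) ε, ‖γ t‖ = t)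
    {S : Set E} (hS : IsClosed S) (h0S : (0 : E) ∉ S)
    (hSsub : ∀ z ∈ S, ‖z‖ < ε) :
    IsClosed (S ∩ γ '' Set.Ico 0 ε) := by
  apply IsSeqClosed.isClosed
  intro xs z hmem hlim
  have hzS : z ∈ S := hS.isSeqClosed (fun n => (hmem n).1) hlim
  have hxs : ∀ n, γ ‖xs n‖ = xs n ∧ ‖xs n‖ ∈ Set.Ico (0:ℝ) ε := by
    intro n
    obtain ⟨t', ht', he⟩ := (hmem n).2
    have : ‖xs n‖ = t' := by rw [← he, hn t' ht']
    rw [this]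
    exact ⟨he, ht'⟩
  have hz0 : z ≠ 0 := fun h => h0S (h ▸ hzS)
  have hzpos : 0 < ‖z‖ := norm_pos_iff.2 hz0
  have hzlt : ‖z‖ < ε := hSsub z hzS
  have hnt : Tendsto (fun n => ‖xs n‖) atTop (nhds ‖z‖) := hlim.norm
  have hca : ContinuousAt γ ‖z‖ :=
    hl.continuousOn.continuousAt (Ico_mem_nhds hzpos hzlt)
  have h2 : Tendsto (fun n => γ ‖xs n‖) atTop (nhds (γ ‖z‖)) := hca.tendsto.comp hnt
  have h3 : Tendsto (fun n => γ ‖xs n‖) atTop (nhds z) :=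
    Tendsto.congr (fun n => ((hxs n).1).symm) hlim
  have hze : γ ‖z‖ = z := tendsto_nhds_unique h2 h3
  exact ⟨hzS, ⟨‖z‖, ⟨norm_nonneg z, hzlt⟩, hze⟩⟩

lemma innerDist_lower {ε : ℝ} {γ₁ γ₂ : ℝ → E} {K₁ K₂ : NNReal}
    (hl₁ : LipschitzOnWith K₁ γ₁ (Set.Ico 0 ε)) (hl₂ : LipschitzOnWith K₂ γ₂ (Set.Ico 0 ε))
    (hn₁ : ∀ t ∈ Set.Ico (0 : ℝ) ε, ‖γ₁ t‖ = t)
    (hn₂ : ∀ t ∈ Set.Ico (0 : ℝ) ε, ‖γ₂ t‖ = t)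
    (hint : γ₁ '' Set.Ico 0 ε ∩ γ₂ '' Set.Ico 0 ε = {0})
    {s t : ℝ} (hs : s ∈ Set.Ioo (0:ℝ) ε) (ht : t ∈ Set.Ioo (0:ℝ) ε) :
    ENNReal.ofReal (s + t) ≤
      innerDist (γ₁ '' Set.Ico 0 ε ∪ γ₂ '' Set.Ico 0 ε) (γ₁ s) (γ₂ t) := by
  set A := γ₁ '' Set.Ico 0 ε with hA
  set B := γ₂ '' Set.Ico 0 ε with hB
  refine le_iInf fun p => le_iInf fun hc => le_iInf fun him => le_iInf fun h0 =>
    le_iInf fun h1 => ?_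
  have hzero : ∃ u ∈ Set.Icc (0:ℝ) 1, p u = 0 := by
    by_contra hno
    push_neg at hno
    set S := p '' Set.Icc 0 1 with hSdef
    have hScl : IsClosed S := (isCompact_Icc.image_of_continuousOn hc).isClosed
    have h0S : (0:E) ∉ S := by
      rintro ⟨u, hu, he⟩
      exact hno u hu he
    have hSsub : ∀ z ∈ S, ‖z‖ < ε := by
      intro z hz
      rcases him hz with ⟨t', ht', he⟩ | ⟨t', ht', he⟩
      · rw [← he, hn₁ t' ht']; exact ht'.2
      · rw [← he, hn₂ t' ht']; exact ht'.2
    have hclA : IsClosed (S ∩ A) := branch_closed hl₁ hn₁ hScl h0S hSsub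
    have hclB : IsClosed (S ∩ B) := branch_closed hl₂ hn₂ hScl h0S hSsub
    have hconn : IsPreconnected S := isPreconnected_Icc.image p hc
    have hcover : S ⊆ (S ∩ A) ∪ (S ∩ B) := by
      intro z hz
      rcases him hz with h | h
      · exact Or.inl ⟨hz, h⟩
      · exact Or.inr ⟨hz, h⟩
    have hxS : γ₁ s ∈ S := ⟨0, by norm_num, h0⟩
    have hyS : γ₂ t ∈ S := ⟨1, by norm_num, h1⟩
    have hne1 : (S ∩ (S ∩ A)).Nonempty :=
      ⟨γ₁ s, hxS, hxS, ⟨s, ⟨le_of_lt hs.1, hs.2⟩, rfl⟩⟩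
    have hne2 : (S ∩ (S ∩ B)).Nonempty :=
      ⟨γ₂ t, hyS, hyS, ⟨t, ⟨le_of_lt ht.1, ht.2⟩, rfl⟩⟩
    obtain ⟨w, hwS, hw⟩ := isPreconnected_closed_iff.mp hconn (S ∩ A) (S ∩ B)
      hclA hclB hcover hne1 hne2
    have : w ∈ A ∩ B := ⟨hw.1.2, hw.2.2⟩
    rw [hint] at this
    rw [Set.mem_singleton_iff] at this
    exact h0S (this ▸ hwS)
  obtain ⟨u, hu, hpu⟩ := hzero
  have hsplit := eVariationOn.Icc_add_Icc p (s := Set.Icc (0:ℝ) 1)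
    (a := 0) (b := u) (c := 1) hu.1 hu.2 hu
  have e1 : Set.Icc (0:ℝ) 1 ∩ Set.Icc 0 u = Set.Icc (0:ℝ) u :=
    Set.inter_eq_self_of_subset_right (Set.Icc_subset_Icc le_rfl hu.2)
  have e2 : Set.Icc (0:ℝ) 1 ∩ Set.Icc u 1 = Set.Icc u 1 :=
    Set.inter_eq_self_of_subset_right (Set.Icc_subset_Icc hu.1 le_rfl)
  have e3 : Set.Icc (0:ℝ) 1 ∩ Set.Icc 0 1 = Set.Icc (0:ℝ) 1 := Set.inter_self _
  rw [e1, e2, e3] at hsplit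
  rw [← hsplit]
  have hd1 : ENNReal.ofReal s ≤ eVariationOn p (Set.Icc 0 u) := by
    have := eVariationOn.edist_le p (Set.left_mem_Icc.2 hu.1) (Set.right_mem_Icc.2 hu.1)
    rw [h0, hpu] at this
    refine le_trans (le_of_eq ?_) this
    rw [edist_dist, dist_zero_right, hn₁ s ⟨le_of_lt hs.1, hs.2⟩]
  have hd2 : ENNReal.ofReal t ≤ eVariationOn p (Set.Icc u 1) := by
    have := eVariationOn.edist_le p (Set.left_mem_Icc.2 hu.2) (Set.right_mem_Icc.2 hu.2)
    rw [h1, hpu] at this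
    refine le_trans (le_of_eq ?_) this
    rw [edist_comm, edist_dist, dist_zero_right, hn₂ t ⟨le_of_lt ht.1, ht.2⟩]
  calc ENNReal.ofReal (s + t) = ENNReal.ofReal s + ENNReal.ofReal t :=
        ENNReal.ofReal_add (le_of_lt hs.1) (le_of_lt ht.1)
    _ ≤ eVariationOn p (Set.Icc 0 u) + eVariationOn p (Set.Icc u 1) := add_le_add hd1 hd2

lemma norm_tangent_one {ε : ℝ} {v : E} {γ : ℝ → E} (hε : 0 < ε)
    (hn : ∀ t ∈ Set.Ico (0 : ℝ) ε, ‖γ t‖ = t)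
    (ht : Tendsto (fun t => t⁻¹ • γ t) (nhdsWithin 0 (Set.Ioi 0)) (nhds v)) :
    ‖v‖ = 1 := by
  have h1 : Tendsto (fun t => ‖t⁻¹ • γ t‖) (nhdsWithin 0 (Set.Ioi 0)) (nhds ‖v‖) := ht.norm
  have h2 : ∀ᶠ t in nhdsWithin (0:ℝ) (Set.Ioi 0), ‖t⁻¹ • γ t‖ = 1 := by
    filter_upwards [Ioo_mem_nhdsGT_of_mem (Set.mem_Ico.2 ⟨le_refl 0, hε⟩)] with t htt
    rw [norm_smul, hn t ⟨le_of_lt htt.1, htt.2⟩, norm_inv, Real.norm_eq_abs,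
      abs_of_pos htt.1, inv_mul_cancel₀ (ne_of_gt htt.1)]
  have h3 : Tendsto (fun _ : ℝ => (1:ℝ)) (nhdsWithin (0:ℝ) (Set.Ioi 0)) (nhds ‖v‖) :=
    h1.congr' h2
  exact tendsto_nhds_unique h3 tendsto_const_nhds

lemma key_lower {v₁ v₂ x₁ x₂ : E} (hv₁ : ‖v₁‖ = 1) (hv₂ : ‖v₂‖ = 1) {d : ℝ}
    (hd : d = ‖v₁ - v₂‖) {s t : ℝ} (hs : 0 ≤ s) (ht : 0 ≤ t)
    (he₁ : ‖x₁ - s • v₁‖ ≤ s * (d / 16)) (he₂ : ‖x₂ - t • v₂‖ ≤ t * (d / 16)) :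
    d / 8 * (s + t) ≤ ‖x₁ - x₂‖ := by
  have hd0 : 0 ≤ d := hd ▸ norm_nonneg _
  have h1 : |s - t| ≤ ‖s • v₁ - t • v₂‖ := by
    have := abs_norm_sub_norm_le (s • v₁) (t • v₂)
    rwa [norm_smul, norm_smul, hv₁, hv₂, mul_one, mul_one, Real.norm_eq_abs,
      Real.norm_eq_abs, abs_of_nonneg hs, abs_of_nonneg ht] at this
  have h2 : s * d - |t - s| ≤ ‖s • v₁ - t • v₂‖ := by
    have e : s • (v₁ - v₂) - (t - s) • v₂ = s • v₁ - t • v₂ := by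
      rw [smul_sub, sub_smul]; abel
    have h := norm_sub_norm_le (s • (v₁ - v₂)) ((t - s) • v₂)
    rw [e] at h
    rwa [norm_smul, norm_smul, hv₂, mul_one, Real.norm_eq_abs, Real.norm_eq_abs,
      abs_of_nonneg hs, ← hd] at h
  have h3 : t * d - |s - t| ≤ ‖s • v₁ - t • v₂‖ := by
    have e : t • (v₂ - v₁) - (s - t) • v₁ = t • v₂ - s • v₁ := by
      rw [smul_sub, sub_smul]; abel
    have h := norm_sub_norm_le (t • (v₂ - v₁)) ((s - t) • v₁)
    rw [e, ← norm_sub_rev] at h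
    have hdd : ‖v₂ - v₁‖ = d := by rw [hd, norm_sub_rev]
    rwa [norm_smul, norm_smul, hv₁, mul_one, Real.norm_eq_abs, Real.norm_eq_abs,
      abs_of_nonneg ht, hdd] at h
  have h4 : d / 4 * (s + t) ≤ ‖s • v₁ - t • v₂‖ := by
    have habs : |t - s| = |s - t| := abs_sub_comm t s
    linarith
  have h5 : ‖s • v₁ - t • v₂‖ ≤ ‖x₁ - x₂‖ + ‖x₁ - s • v₁‖ + ‖x₂ - t • v₂‖ := by
    have e : s • v₁ - t • v₂ = (x₁ - x₂) - (x₁ - s • v₁) + (x₂ - t • v₂) := by abel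
    rw [e]
    calc ‖(x₁ - x₂) - (x₁ - s • v₁) + (x₂ - t • v₂)‖
        ≤ ‖(x₁ - x₂) - (x₁ - s • v₁)‖ + ‖x₂ - t • v₂‖ := norm_add_le _ _
      _ ≤ ‖x₁ - x₂‖ + ‖x₁ - s • v₁‖ + ‖x₂ - t • v₂‖ := by
          linarith [norm_sub_le (x₁ - x₂) (x₁ - s • v₁)]
  nlinarith [mul_nonneg (mul_nonneg hd0 hs) ht, mul_nonneg hd0 hs, mul_nonneg hd0 ht]

lemma cross_final {K₁ K₂ Km d s t N : ℝ} (hd : 0 < d) (hs : 0 ≤ s) (ht : 0 ≤ t)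
    (hN : 0 ≤ N) (h1 : K₁ ≤ Km) (h2 : K₂ ≤ Km) (h01 : 0 ≤ K₁) (h02 : 0 ≤ K₂)
    (hlow : d / 8 * (s + t) ≤ N) :
    K₁ * s + K₂ * t ≤ Km * (1 + 8 / d) * N := by
  have hKm : 0 ≤ Km := le_trans h01 h1
  have e1 : Km * (8 / d) * (d / 8 * (s + t)) = Km * (s + t) := by
    field_simp
  have e2 : Km * (8 / d) * (d / 8 * (s + t)) ≤ Km * (8 / d) * N :=
    mul_le_mul_of_nonneg_left hlow (by positivity)
  have e3 : K₁ * s + K₂ * t ≤ Km * (s + t) := by nlinarith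
  nlinarith [mul_nonneg hKm hN]

lemma same_final {K Km d a N : ℝ} (hd : 0 < d) (hK : K ≤ Km) (h0 : 0 ≤ K)
    (ha : 0 ≤ a) (haN : a ≤ N) : K * a ≤ Km * (1 + 8 / d) * N := by
  have hKm : 0 ≤ Km := le_trans h0 hK
  have h8 : 0 < 8 / d := by positivity
  nlinarith [mul_nonneg hKm (le_trans ha haN)]

end Aux

/-- The germ at `0` of the union of two Lipschitz curve branches, each parametrized by the
distance, with tangent direction vectors `v₁`, `v₂` at `0` and meeting only at `0`, is
Lipschitz normally embedded if and only if `v₁ ≠ v₂`. -/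
theorem lne_iff_distinct_tangent_halfLines
    {E : Type*} [NormedAddCommGroup E] [NormedSpace ℝ E]
    (v₁ v₂ : E) (ε : ℝ) (hε : 0 < ε) (γ₁ γ₂ : ℝ → E) (K₁ K₂ : NNReal)
    (hl₁ : LipschitzOnWith K₁ γ₁ (Set.Ico 0 ε)) (hl₂ : LipschitzOnWith K₂ γ₂ (Set.Ico 0 ε))
    (h₁0 : γ₁ 0 = 0) (h₂0 : γ₂ 0 = 0)
    (hn₁ : ∀ t ∈ Set.Ico (0 : ℝ) ε, ‖γ₁ t‖ = t)
    (hn₂ : ∀ t ∈ Set.Ico (0 : ℝ) ε, ‖γ₂ t‖ = t)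
    (ht₁ : Tendsto (fun t => t⁻¹ • γ₁ t) (nhdsWithin 0 (Set.Ioi 0)) (nhds v₁))
    (ht₂ : Tendsto (fun t => t⁻¹ • γ₂ t) (nhdsWithin 0 (Set.Ioi 0)) (nhds v₂))
    (hint : γ₁ '' Set.Ico 0 ε ∩ γ₂ '' Set.Ico 0 ε = {0}) :
    (∃ C : ℝ, 1 ≤ C ∧ ∃ δ : ℝ, 0 < δ ∧
        ∀ x ∈ γ₁ '' Set.Ico 0 ε ∪ γ₂ '' Set.Ico 0 ε,
        ∀ y ∈ γ₁ '' Set.Ico 0 ε ∪ γ₂ '' Set.Ico 0 ε,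
          ‖x‖ < δ → ‖y‖ < δ →
            innerDist (γ₁ '' Set.Ico 0 ε ∪ γ₂ '' Set.Ico 0 ε) x y ≤
              ENNReal.ofReal (C * ‖x - y‖)) ↔ v₁ ≠ v₂ := by
  constructor
  · -- LNE → v₁ ≠ v₂
    rintro ⟨C, hC1, δ, hδ, hC⟩ hne
    have hC0 : (0:ℝ) < C := lt_of_lt_of_le one_pos hC1
    have hdt : Tendsto (fun r : ℝ => ‖r⁻¹ • γ₁ r - r⁻¹ • γ₂ r‖)
        (nhdsWithin 0 (Set.Ioi 0)) (nhds 0) := by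
      have := (ht₁.sub ht₂).norm
      rwa [hne, sub_self, norm_zero] at this
    have ev1 : ∀ᶠ r in nhdsWithin (0:ℝ) (Set.Ioi 0),
        ‖r⁻¹ • γ₁ r - r⁻¹ • γ₂ r‖ < 2 / C :=
      hdt.eventually (gt_mem_nhds (by positivity))
    have ev2 : Set.Ioo (0:ℝ) (min δ ε) ∈ nhdsWithin (0:ℝ) (Set.Ioi 0) :=
      Ioo_mem_nhdsGT_of_mem (Set.mem_Ico.2 ⟨le_refl 0, lt_min hδ hε⟩)
    obtain ⟨r, hr1, hr2⟩ := (ev1.and (eventually_of_mem ev2 (fun x hx => hx))).exists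
    have hr0 : 0 < r := hr2.1
    have hrδ : r < δ := lt_of_lt_of_le hr2.2 (min_le_left _ _)
    have hrε : r < ε := lt_of_lt_of_le hr2.2 (min_le_right _ _)
    have hrI : r ∈ Set.Ico (0:ℝ) ε := ⟨le_of_lt hr0, hrε⟩
    have hxmem : γ₁ r ∈ γ₁ '' Set.Ico 0 ε ∪ γ₂ '' Set.Ico 0 ε :=
      Or.inl ⟨r, hrI, rfl⟩
    have hymem : γ₂ r ∈ γ₁ '' Set.Ico 0 ε ∪ γ₂ '' Set.Ico 0 ε :=
      Or.inr ⟨r, hrI, rfl⟩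
    have happ := hC (γ₁ r) hxmem (γ₂ r) hymem
      (by rw [hn₁ r hrI]; exact hrδ) (by rw [hn₂ r hrI]; exact hrδ)
    have hlow := innerDist_lower hl₁ hl₂ hn₁ hn₂ hint
      (s := r) (t := r) ⟨hr0, hrε⟩ ⟨hr0, hrε⟩
    have hxy : ‖γ₁ r - γ₂ r‖ = r * ‖r⁻¹ • γ₁ r - r⁻¹ • γ₂ r‖ := by
      rw [← norm_smul_of_nonneg (le_of_lt hr0), smul_sub,
        smul_inv_smul₀ (ne_of_gt hr0), smul_inv_smul₀ (ne_of_gt hr0)]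
    have hkey : C * ‖γ₁ r - γ₂ r‖ < r + r := by
      rw [hxy]
      have h1 : C * ‖r⁻¹ • γ₁ r - r⁻¹ • γ₂ r‖ < 2 := by
        have := hr1
        rw [lt_div_iff₀ hC0] at this
        linarith [this]
      nlinarith [norm_nonneg (r⁻¹ • γ₁ r - r⁻¹ • γ₂ r)]
    have hle := le_trans hlow happ
    rw [ENNReal.ofReal_le_ofReal_iff (by positivity)] at hle
    linarith
  · -- v₁ ≠ v₂ → LNE
    intro hv
    set d : ℝ := ‖v₁ - v₂‖ with hd
    have hd0 : 0 < d := by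
      rw [hd]
      exact norm_sub_pos_iff.2 hv
    have hv1 : ‖v₁‖ = 1 := norm_tangent_one hε hn₁ ht₁
    have hv2 : ‖v₂‖ = 1 := norm_tangent_one hε hn₂ ht₂
    rw [Metric.tendsto_nhdsWithin_nhds] at ht₁ ht₂
    obtain ⟨δ₁, hδ₁, h₁⟩ := ht₁ (d / 16) (by positivity)
    obtain ⟨δ₂, hδ₂, h₂⟩ := ht₂ (d / 16) (by positivity)
    set δ : ℝ := min (min δ₁ δ₂) ε with hδdef
    have hδ : 0 < δ := lt_min (lt_min hδ₁ hδ₂) hε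
    have he₁ : ∀ s : ℝ, 0 ≤ s → s < δ → ‖γ₁ s - s • v₁‖ ≤ s * (d / 16) := by
      intro s hs0 hsδ
      rcases eq_or_lt_of_le hs0 with h | h
      · simp [← h, h₁0]
      · have hdist : dist s 0 < δ₁ := by
          rw [Real.dist_eq, sub_zero, abs_of_pos h]
          exact lt_of_lt_of_le hsδ (le_trans (min_le_left _ _) (min_le_left _ _))
        have := h₁ (Set.mem_Ioi.2 h) hdist
        have he : γ₁ s - s • v₁ = s • (s⁻¹ • γ₁ s - v₁) := by
          rw [smul_sub, smul_inv_smul₀ (ne_of_gt h)]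
        rw [he, norm_smul, Real.norm_eq_abs, abs_of_pos h]
        rw [dist_eq_norm] at this
        exact mul_le_mul_of_nonneg_left (le_of_lt this) hs0
    have he₂ : ∀ s : ℝ, 0 ≤ s → s < δ → ‖γ₂ s - s • v₂‖ ≤ s * (d / 16) := by
      intro s hs0 hsδ
      rcases eq_or_lt_of_le hs0 with h | h
      · simp [← h, h₂0]
      · have hdist : dist s 0 < δ₂ := by
          rw [Real.dist_eq, sub_zero, abs_of_pos h]
          exact lt_of_lt_of_le hsδ (le_trans (min_le_left _ _) (min_le_right _ _))
        have := h₂ (Set.mem_Ioi.2 h) hdist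
        have he : γ₂ s - s • v₂ = s • (s⁻¹ • γ₂ s - v₂) := by
          rw [smul_sub, smul_inv_smul₀ (ne_of_gt h)]
        rw [he, norm_smul, Real.norm_eq_abs, abs_of_pos h]
        rw [dist_eq_norm] at this
        exact mul_le_mul_of_nonneg_left (le_of_lt this) hs0
    set Km : ℝ := max (K₁ : ℝ) (max (K₂ : ℝ) 1) with hKm
    have hKm1 : (1:ℝ) ≤ Km := le_max_of_le_right (le_max_right _ _)
    have hK₁m : (K₁ : ℝ) ≤ Km := le_max_left _ _
    have hK₂m : (K₂ : ℝ) ≤ Km := le_max_of_le_right (le_max_left _ _)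
    set C : ℝ := Km * (1 + 8 / d) with hCdef
    have hC1 : (1:ℝ) ≤ C := by
      have h8 : (0:ℝ) < 8 / d := by positivity
      nlinarith
    refine ⟨C, hC1, δ, hδ, ?_⟩
    rintro x hx y hy hxδ hyδ
    rcases hx with ⟨s, hsI, rfl⟩ | ⟨s, hsI, rfl⟩ <;>
      rcases hy with ⟨t, htI, rfl⟩ | ⟨t, htI, rfl⟩
    · -- both on γ₁
      refine le_trans (innerDist_same _ hl₁ Set.subset_union_left hsI htI) ?_
      apply ENNReal.ofReal_le_ofReal
      have habs : |t - s| ≤ ‖γ₁ s - γ₁ t‖ := by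
        have := abs_norm_sub_norm_le (γ₁ t) (γ₁ s)
        rw [hn₁ t htI, hn₁ s hsI, norm_sub_rev] at this
        exact this
      exact same_final hd0 hK₁m K₁.coe_nonneg (abs_nonneg _) habs
    · -- x on γ₁, y on γ₂
      refine le_trans (innerDist_cross _ hl₁ hl₂ h₁0 h₂0
        Set.subset_union_left Set.subset_union_right hsI htI) ?_
      apply ENNReal.ofReal_le_ofReal
      have hsδ : s < δ := by rw [← hn₁ s hsI]; exact hxδ
      have htδ : t < δ := by rw [← hn₂ t htI]; exact hyδ
      have hlow : d / 8 * (s + t) ≤ ‖γ₁ s - γ₂ t‖ :=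
        key_lower hv1 hv2 hd hsI.1 htI.1
          (he₁ s hsI.1 hsδ) (he₂ t htI.1 htδ)
      exact cross_final hd0 hsI.1 htI.1 (norm_nonneg _) hK₁m hK₂m
        K₁.coe_nonneg K₂.coe_nonneg hlow
    · -- x on γ₂, y on γ₁
      refine le_trans (innerDist_cross _ hl₂ hl₁ h₂0 h₁0
        Set.subset_union_right Set.subset_union_left hsI htI) ?_
      apply ENNReal.ofReal_le_ofReal
      have hsδ : s < δ := by rw [← hn₂ s hsI]; exact hxδ
      have htδ : t < δ := by rw [← hn₁ t htI]; exact hyδ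
      have hlow : d / 8 * (t + s) ≤ ‖γ₁ t - γ₂ s‖ :=
        key_lower hv1 hv2 hd htI.1 hsI.1
          (he₁ t htI.1 htδ) (he₂ s hsI.1 hsδ)
      rw [norm_sub_rev] at hlow
      have hlow' : d / 8 * (s + t) ≤ ‖γ₂ s - γ₁ t‖ := by
        rw [add_comm]; exact hlow
      exact cross_final hd0 hsI.1 htI.1 (norm_nonneg _) hK₂m hK₁m
        K₂.coe_nonneg K₁.coe_nonneg hlow'
    · -- both on γ₂
      refine le_trans (innerDist_same _ hl₂ Set.subset_union_right hsI htI) ?_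
      apply ENNReal.ofReal_le_ofReal
      have habs : |t - s| ≤ ‖γ₂ s - γ₂ t‖ := by
        have := abs_norm_sub_norm_le (γ₂ t) (γ₂ s)
        rw [hn₂ t htI, hn₂ s hsI, norm_sub_rev] at this
        exact this
      exact same_final hd0 hK₂m K₂.coe_nonneg (abs_nonneg _) habs
end

section
/- Let f : ℝⁿ → ℝᵐ be a map which is continuously differentiable (C¹) on a neighbourhood of 0. Then the germ at the point p₀ = (0, f(0)) of the graph G = {(x, f(x)) : x ∈ ℝⁿ} ⊆ ℝⁿ × ℝᵐ is Lipschitz normally embedded: there exist C ≥ 1 and δ > 0 such that for all p, q ∈ G with ‖p − p₀‖ < δ and ‖q − p₀‖ < δ, the inner (length) distance between p and q inside G ∩ B(p₀, δ) is at most C·‖p − q‖. -/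
/-!
Near `0` the map `f` is a `1/4`-approximation of `A = Df(0)` on a ball `B(0, δ)`, hence
Lipschitz there, so it suffices to join `x` to `y` inside `B(0, δ)` by a path of length
`O(‖x - y‖)` whose image under `f` stays in `B(f 0, δ)`, and to lift it to the graph. The
straight segment may leave that ball: `f` exceeds the convex combination of its endpoint values
by up to `2ε t(1 - t)‖x - y‖`. Bending the segment towards the origin by the factor
`1 - (‖x - y‖ / δ) t(1 - t)` wins this back, since `f` is just as nearly affine along rays from
`0`, and it costs only another `‖x - y‖` in length.
-/

open Filter Set

open Metric
open scoped NNReal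

theorem innerDist_le_of_lipschitzOnWith {E : Type*} [NormedAddCommGroup E] [NormedSpace ℝ E]
    {X : Set E} {γ : ℝ → E} {K : ℝ≥0} (hγ : LipschitzOnWith K γ (Icc 0 1))
    (hX : MapsTo γ (Icc 0 1) X) : innerDist X (γ 0) (γ 1) ≤ K := by
  have hvar : eVariationOn γ (Icc 0 1) ≤ K := by
    simpa [eVariationOn_id_Icc] using hγ.comp_eVariationOn_le (g := id) (mapsTo_id _)
  exact iInf_le_of_le γ <| iInf_le_of_le hγ.continuousOn <| iInf_le_of_le hX.image_subset <|
    iInf_le_of_le rfl <| iInf_le_of_le rfl hvar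

theorem mul_mul_one_sub_mem_Icc {c t : ℝ} (hc : 0 ≤ c) (ht : t ∈ Icc (0 : ℝ) 1) :
    c * (t * (1 - t)) ∈ Icc 0 (c / 4) := by
  obtain ⟨ht0, ht1⟩ := ht
  have hquarter : t * (1 - t) ≤ 1 / 4 := by nlinarith [sq_nonneg (t - 1 / 2)]
  exact ⟨mul_nonneg hc (mul_nonneg ht0 (sub_nonneg.2 ht1)), by nlinarith⟩

section BentPath

variable {E : Type*} [NormedAddCommGroup E] [NormedSpace ℝ E] {x y : E} {c t r : ℝ}

theorem norm_convexComb_le (hx : ‖x‖ ≤ r) (hy : ‖y‖ ≤ r) (ht : t ∈ Icc 0 1) :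
    ‖(1 - t) • x + t • y‖ ≤ r :=
  mem_closedBall_zero_iff.1 <| convex_closedBall (0 : E) r (mem_closedBall_zero_iff.2 hx)
    (mem_closedBall_zero_iff.2 hy) (sub_nonneg.2 ht.2) ht.1 (sub_add_cancel 1 t)

def bentPath (x y : E) (c t : ℝ) : E := (1 - c * (t * (1 - t))) • ((1 - t) • x + t • y)

@[simp] theorem bentPath_zero : bentPath x y c 0 = x := by simp [bentPath]

@[simp] theorem bentPath_one : bentPath x y c 1 = y := by simp [bentPath]

theorem bentPath_mem {s : Set E} (hs : Convex ℝ s) (h0 : 0 ∈ s) (hx : x ∈ s) (hy : y ∈ s)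
    (hc0 : 0 ≤ c) (hc : c ≤ 4) (ht : t ∈ Icc 0 1) : bentPath x y c t ∈ s := by
  have hμ := mul_mul_one_sub_mem_Icc hc0 ht
  exact hs.smul_mem_of_zero_mem h0 (hs hx hy (sub_nonneg.2 ht.2) ht.1 (sub_add_cancel 1 t))
    ⟨by linarith [hμ.2], sub_le_self _ hμ.1⟩

theorem lipschitzOnWith_bentPath (hx : ‖x‖ ≤ r) (hy : ‖y‖ ≤ r) (hc0 : 0 ≤ c) (hc : c ≤ 4) :
    LipschitzOnWith (c * r + ‖x - y‖).toNNReal (bentPath x y c) (Icc 0 1) := by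
  refine LipschitzOnWith.of_dist_le' fun a ha b hb ↦ ?_
  set z : ℝ → E := fun t ↦ (1 - t) • x + t • y
  have hza : ‖z a‖ ≤ r := norm_convexComb_le hx hy ha
  have hμb := mul_mul_one_sub_mem_Icc hc0 hb
  have hsplit : bentPath x y c a - bentPath x y c b =
      (c * ((b - a) * (1 - a - b))) • z a + (1 - c * (b * (1 - b))) • ((a - b) • (y - x)) := by
    simp only [bentPath, z]
    module
  have hab : |1 - a - b| ≤ 1 := abs_le.2 ⟨by linarith [ha.2, hb.2], by linarith [ha.1, hb.1]⟩
  rw [dist_eq_norm, hsplit, Real.dist_eq]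
  refine (norm_add_le _ _).trans ?_
  rw [norm_smul, norm_smul, norm_smul, Real.norm_eq_abs, Real.norm_eq_abs, Real.norm_eq_abs,
    abs_mul, abs_mul, abs_of_nonneg hc0, abs_sub_comm b a, norm_sub_rev y x,
    abs_of_nonneg (show 0 ≤ 1 - c * (b * (1 - b)) by linarith [hμb.2])]
  calc c * (|a - b| * |1 - a - b|) * ‖z a‖ + (1 - c * (b * (1 - b))) * (|a - b| * ‖x - y‖)
      ≤ c * (|a - b| * 1) * r + 1 * (|a - b| * ‖x - y‖) := by
        gcongr
        linarith [hμb.1]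
    _ = (c * r + ‖x - y‖) * |a - b| := by ring

end BentPath

namespace ApproximatesLinearOn

variable {E F : Type*} [NormedAddCommGroup E] [NormedSpace ℝ E] [NormedAddCommGroup F]
  [NormedSpace ℝ F] {f : E → F} {A : E →L[ℝ] F} {s : Set E} {ε : ℝ≥0} {u v x y : E} {t : ℝ}

theorem norm_sub_convexComb_le (hf : ApproximatesLinearOn f A s ε) (hu : u ∈ s) (hv : v ∈ s)
    (hz : (1 - t) • u + t • v ∈ s) (ht : t ∈ Icc 0 1) :
    ‖f ((1 - t) • u + t • v) - ((1 - t) • f u + t • f v)‖ ≤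
      2 * ε * (t * (1 - t)) * ‖u - v‖ := by
  obtain ⟨ht0, ht1⟩ := ht
  set z := (1 - t) • u + t • v
  have hzu : z - u = t • (v - u) := by module
  have hzv : z - v = (1 - t) • (u - v) := by module
  have hsplit : f z - ((1 - t) • f u + t • f v) =
      (1 - t) • (f z - f u - A (z - u)) + t • (f z - f v - A (z - v)) := by
    rw [hzu, hzv, map_smul, map_smul, ← neg_sub u v, map_neg]
    module
  have hnu : ‖z - u‖ = t * ‖u - v‖ := by
    rw [hzu, norm_smul, Real.norm_of_nonneg ht0, norm_sub_rev]
  have hnv : ‖z - v‖ = (1 - t) * ‖u - v‖ := by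
    rw [hzv, norm_smul, Real.norm_of_nonneg (sub_nonneg.2 ht1)]
  calc ‖f z - ((1 - t) • f u + t • f v)‖
      ≤ (1 - t) * ‖f z - f u - A (z - u)‖ + t * ‖f z - f v - A (z - v)‖ := by
        rw [hsplit]
        refine (norm_add_le _ _).trans_eq ?_
        rw [norm_smul, norm_smul, Real.norm_of_nonneg (sub_nonneg.2 ht1),
          Real.norm_of_nonneg ht0]
    _ ≤ (1 - t) * (ε * ‖z - u‖) + t * (ε * ‖z - v‖) := by
        gcongr
        exacts [hf z hz u hu, hf z hz v hv]
    _ = 2 * ε * (t * (1 - t)) * ‖u - v‖ := by rw [hnu, hnv]; ring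

theorem norm_convexComb_sub_le (hf : ApproximatesLinearOn f A s ε) (hu : u ∈ s) (hv : v ∈ s)
    (hz : (1 - t) • u + t • v ∈ s) (ht : t ∈ Icc 0 1) (p : F) :
    ‖f ((1 - t) • u + t • v) - p‖ ≤
      (1 - t) * ‖f u - p‖ + t * ‖f v - p‖ + 2 * ε * (t * (1 - t)) * ‖u - v‖ := by
  have hsplit : f ((1 - t) • u + t • v) - p = (f ((1 - t) • u + t • v) -
      ((1 - t) • f u + t • f v)) + ((1 - t) • (f u - p) + t • (f v - p)) := by module
  rw [hsplit]
  refine (norm_add_le _ _).trans ?_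
  have hcomb := norm_add_le ((1 - t) • (f u - p)) (t • (f v - p))
  rw [norm_smul, norm_smul, Real.norm_of_nonneg (sub_nonneg.2 ht.2),
    Real.norm_of_nonneg ht.1] at hcomb
  linarith [hf.norm_sub_convexComb_le hu hv hz ht]

theorem norm_bentPath_sub_lt {c r R : ℝ} (hf : ApproximatesLinearOn f A s ε)
    (hs : Convex ℝ s) (h0 : 0 ∈ s) (hx : x ∈ s) (hy : y ∈ s) (hxr : ‖x‖ ≤ r) (hyr : ‖y‖ ≤ r)
    (hfx : ‖f x - f 0‖ < R) (hfy : ‖f y - f 0‖ < R) (hc0 : 0 ≤ c) (hc : c < 4)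
    (hxy : ‖x - y‖ ≤ c * r) (hεR : 4 * ε * r ≤ R) (ht : t ∈ Icc 0 1) :
    ‖f (bentPath x y c t) - f 0‖ < R := by
  obtain ⟨ht0, ht1⟩ := ht
  set z := (1 - t) • x + t • y
  set μ := c * (t * (1 - t))
  have hμ := mul_mul_one_sub_mem_Icc hc0 ⟨ht0, ht1⟩
  have hμ1 : μ < 1 := by linarith [hμ.2]
  have hz : z ∈ s := hs hx hy (sub_nonneg.2 ht1) ht0 (sub_add_cancel 1 t)
  have hzr : ‖z‖ ≤ r := norm_convexComb_le hxr hyr ⟨ht0, ht1⟩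
  -- The convex-combination estimate is used twice: on the segment `[x, y]`, then on `[z, 0]`.
  have hw : bentPath x y c t = (1 - μ) • z + μ • (0 : E) := by simp [bentPath, z, μ]
  have hws : (1 - μ) • z + μ • (0 : E) ∈ s := hw ▸ bentPath_mem hs h0 hx hy hc0 hc.le ⟨ht0, ht1⟩
  have hfz := hf.norm_convexComb_sub_le hx hy hz ⟨ht0, ht1⟩ (f 0)
  have hfw := hf.norm_convexComb_sub_le hz h0 hws ⟨hμ.1, hμ1.le⟩ (f 0)
  rw [← hw, sub_self, norm_zero, mul_zero, add_zero, sub_zero] at hfw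
  have hconv : (1 - t) * ‖f x - f 0‖ + t * ‖f y - f 0‖ < R := by
    rcases eq_or_lt_of_le ht0 with rfl | ht0'
    · simpa using hfx
    · nlinarith
  have herr : t * (1 - t) * ‖x - y‖ ≤ μ * r := by
    simp only [μ]
    nlinarith [mul_nonneg ht0 (sub_nonneg.2 ht1)]
  have hε : (0 : ℝ) ≤ ε := ε.2
  have hfz' : ‖f z - f 0‖ < R + 2 * ε * (μ * r) := by nlinarith
  calc ‖f (bentPath x y c t) - f 0‖
      ≤ (1 - μ) * ‖f z - f 0‖ + 2 * ε * (μ * (1 - μ)) * ‖z‖ := hfw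
    _ < (1 - μ) * (R + 2 * ε * (μ * r)) + 2 * ε * (μ * (1 - μ)) * r := by
        exact add_lt_add_of_lt_of_le (mul_lt_mul_of_pos_left hfz' (sub_pos.2 hμ1))
          (mul_le_mul_of_nonneg_left hzr (by positivity))
    _ = (1 - μ) * R + μ * ((1 - μ) * (4 * ε * r)) := by ring
    _ ≤ (1 - μ) * R + μ * R := by
        have hr : 0 ≤ r := (norm_nonneg x).trans hxr
        have hεr : 0 ≤ 4 * ε * r := by positivity
        gcongr
        nlinarith [mul_nonneg hμ.1 hεr]
    _ = R := by ring

theorem innerDist_graph_inter_ball_le {δ : ℝ} (hf : ApproximatesLinearOn f A (ball 0 δ) ε)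
    (hε : 4 * ε ≤ 1) (hx : (x, f x) ∈ ball (0, f 0) δ) (hy : (y, f y) ∈ ball (0, f 0) δ) :
    innerDist ({q : E × F | q.2 = f q.1} ∩ ball (0, f 0) δ) (x, f x) (y, f y) ≤
      ENNReal.ofReal (2 * (‖A‖ + 1) * ‖x - y‖) := by
  rw [← ball_prod_same, mem_prod, mem_ball_iff_norm, mem_ball_iff_norm, sub_zero] at hx hy
  have hδ : 0 < δ := (norm_nonneg x).trans_lt hx.1
  set c := ‖x - y‖ / δ
  have hc0 : 0 ≤ c := by positivity
  have hc : c < 4 := by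
    rw [div_lt_iff₀ hδ]
    linarith [norm_sub_le x y, hx.1, hy.1]
  have hcδ : c * δ = ‖x - y‖ := div_mul_cancel₀ _ hδ.ne'
  have hxδ : x ∈ ball 0 δ := mem_ball_zero_iff.2 hx.1
  have hyδ : y ∈ ball 0 δ := mem_ball_zero_iff.2 hy.1
  have hw : MapsTo (bentPath x y c) (Icc 0 1) (ball 0 δ) := fun t ht ↦
    bentPath_mem (convex_ball 0 δ) (mem_ball_self hδ) hxδ hyδ hc0 hc.le ht
  have hw_lip := lipschitzOnWith_bentPath hx.1.le hy.1.le hc0 hc.le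
  have hf_lip : LipschitzOnWith (‖A‖₊ + ε) f (ball 0 δ) :=
    lipschitzOnWith_iff_restrict.2 hf.lipschitz
  have hγX : MapsTo (fun t ↦ (bentPath x y c t, f (bentPath x y c t))) (Icc 0 1)
      ({q : E × F | q.2 = f q.1} ∩ ball (0, f 0) δ) := fun t ht ↦ by
    refine ⟨rfl, ?_⟩
    rw [← ball_prod_same]
    refine ⟨hw ht, mem_ball_iff_norm.2 ?_⟩
    exact hf.norm_bentPath_sub_lt (convex_ball 0 δ) (mem_ball_self hδ) hxδ hyδ hx.1.le
      hy.1.le hx.2 hy.2 hc0 hc hcδ.ge (by nlinarith) ht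
  have hlen := innerDist_le_of_lipschitzOnWith (hw_lip.prodMk (hf_lip.comp hw_lip hw)) hγX
  simp only [Function.comp_apply, bentPath_zero, bentPath_one] at hlen
  refine hlen.trans ?_
  rw [← ENNReal.ofReal_coe_nnreal]
  refine ENNReal.ofReal_le_ofReal ?_
  have hA : (0 : ℝ) ≤ ‖A‖ := norm_nonneg A
  have hε' : (ε : ℝ) ≤ 1 := by
    have : (4 * ε : ℝ) ≤ 1 := by exact_mod_cast hε
    linarith [ε.2]
  rw [NNReal.coe_max, NNReal.coe_mul, Real.coe_toNNReal _ (by positivity), hcδ]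
  push_cast
  refine max_le (by nlinarith [norm_nonneg (x - y)]) ?_
  nlinarith [norm_nonneg (x - y)]

end ApproximatesLinearOn

/-- The germ at `p₀ = (0, f 0)` of the graph of a map `f : ℝⁿ → ℝᵐ` which is `C¹` on a
neighbourhood of `0` is Lipschitz normally embedded: there are `C ≥ 1` and `δ > 0` such that
any two points of the graph within distance `δ` of `p₀` have inner distance inside
`graph ∩ B(p₀, δ)` at most `C` times their distance. -/
theorem c1_graph_germ_lne
    {n m : ℕ} (f : EuclideanSpace ℝ (Fin n) → EuclideanSpace ℝ (Fin m))
    (U : Set (EuclideanSpace ℝ (Fin n))) (hU : U ∈ nhds (0 : EuclideanSpace ℝ (Fin n)))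
    (hf : ContDiffOn ℝ 1 f U) :
    ∃ C : ℝ, 1 ≤ C ∧ ∃ δ : ℝ, 0 < δ ∧
      ∀ p ∈ {q : EuclideanSpace ℝ (Fin n) × EuclideanSpace ℝ (Fin m) | q.2 = f q.1},
      ∀ q ∈ {q : EuclideanSpace ℝ (Fin n) × EuclideanSpace ℝ (Fin m) | q.2 = f q.1},
        ‖p - (0, f 0)‖ < δ → ‖q - (0, f 0)‖ < δ →
          innerDist ({q : EuclideanSpace ℝ (Fin n) × EuclideanSpace ℝ (Fin m) | q.2 = f q.1} ∩
              Metric.ball ((0 : EuclideanSpace ℝ (Fin n)), f 0) δ) p q ≤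
            ENNReal.ofReal (C * ‖p - q‖) := by
  have hstrict := (hf.contDiffAt hU).hasStrictFDerivAt one_ne_zero
  obtain ⟨s, hs, hfs⟩ := hstrict.approximates_deriv_on_nhds (c := 1 / 4) (Or.inr (by norm_num))
  obtain ⟨δ, hδ, hδs⟩ := Metric.mem_nhds_iff.1 hs
  refine ⟨2 * (‖fderiv ℝ f 0‖ + 1), by linarith [norm_nonneg (fderiv ℝ f 0)], δ, hδ, ?_⟩
  rintro ⟨x, _⟩ (rfl : _ = f x) ⟨y, _⟩ (rfl : _ = f y) hp hq
  refine ((hfs.mono_set hδs).innerDist_graph_inter_ball_le (by norm_num) (mem_ball_iff_norm.2 hp)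
    (mem_ball_iff_norm.2 hq)).trans (ENNReal.ofReal_le_ofReal ?_)
  gcongr
  exact norm_fst_le ((x, f x) - (y, f y))
end

section
/- Let b > 0 and let f₁, f₂ : [0, b] → ℝ be continuous functions with f₁(0) = f₂(0) = 0, f₁(x) < f₂(x) for all x ∈ (0, b], and (f₂(x) − f₁(x))/x → 0 as x → 0⁺ (the two graphs share a common tangent at the origin). Let X = {(x, f₁(x)) : x ∈ [0, b]} ∪ {(x, f₂(x)) : x ∈ [0, b]} ⊆ ℝ². Then the origin lies in the closure of the medial axis of X: for every δ > 0 there exists a point w ∈ M_X with ‖w‖ < δ. Moreover such w may be chosen of the form w = (x₀, y₀) with x₀ ∈ (0, δ) and f₁(x₀) < y₀ < f₂(x₀). -/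
open Filter Set

/-- The point of the Euclidean plane with coordinates `x`, `y`. -/
noncomputable def pt (x y : ℝ) : EuclideanSpace ℝ (Fin 2) :=
  (EuclideanSpace.equiv (Fin 2) ℝ).symm ![x, y]

/-- The set of points of `X` closest to `x`. -/
def nearestPoints (X : Set (EuclideanSpace ℝ (Fin 2)))
    (x : EuclideanSpace ℝ (Fin 2)) : Set (EuclideanSpace ℝ (Fin 2)) :=
  {y ∈ X | ‖y - x‖ = Metric.infDist x X}

/-- The medial axis of `X` : points outside `X` with at least two closest points in `X`. -/
def medialAxis (X : Set (EuclideanSpace ℝ (Fin 2))) : Set (EuclideanSpace ℝ (Fin 2)) :=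
  {x | x ∉ X ∧ ∃ y₁ ∈ nearestPoints X x, ∃ y₂ ∈ nearestPoints X x, y₁ ≠ y₂}

open Metric Topology

/-!
Between two graphs sharing a tangent at the origin, take a vertical segment over a small
abscissa `x₀`, shorter than `x₀` by tangency. Its endpoints lie on different branches, so the
difference of the distances to the two branches changes sign along it and vanishes at some
`w`. The closest points of `w` on the two branches are then both closest in the union, and
they are distinct: the branches meet only at the origin, which is at distance at least `x₀`
from `w`, farther than the lower endpoint of the segment.
-/

lemma pt_zero : pt 0 0 = 0 := by
  ext i
  fin_cases i <;> rfl

lemma pt_inj {x y x' y' : ℝ} : pt x y = pt x' y' ↔ x = x' ∧ y = y' :=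
  ⟨fun h => ⟨congrArg (· 0) h, congrArg (· 1) h⟩, fun ⟨hx, hy⟩ => hx ▸ hy ▸ rfl⟩

lemma abs_le_norm_pt (x y : ℝ) : |x| ≤ ‖pt x y‖ :=
  PiLp.norm_apply_le (pt x y) 0

lemma dist_pt_pt_same_fst (x y y' : ℝ) : dist (pt x y) (pt x y') = |y - y'| := by
  simp [EuclideanSpace.dist_eq, Fin.sum_univ_two, pt, Real.dist_eq, Real.sqrt_sq_eq_abs]

lemma ContinuousOn.pt {α : Type*} [TopologicalSpace α] {f g : α → ℝ} {s : Set α}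
    (hf : ContinuousOn f s) (hg : ContinuousOn g s) : ContinuousOn (fun a => pt (f a) (g a)) s :=
  (EuclideanSpace.equiv (Fin 2) ℝ).symm.continuous.comp_continuousOn <|
    continuousOn_pi.2 fun i => by fin_cases i <;> simpa

section InfDist

variable {α : Type*} [PseudoMetricSpace α] {A B : Set α}

lemma Metric.infDist_union_of_le {x : α} (hA : A.Nonempty) (h : infDist x A ≤ infDist x B) :
    infDist x (A ∪ B) = infDist x A :=
  le_antisymm (infDist_le_infDist_of_subset subset_union_left hA) <|
    (le_infDist (hA.mono subset_union_left)).2 fun _ hy =>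
      hy.elim infDist_le_dist_of_mem fun hyB => h.trans (infDist_le_dist_of_mem hyB)

lemma exists_mem_Ioo_infDist_eq (hA : IsClosed A) (hB : IsClosed B) {γ : ℝ → α} {a c : ℝ}
    (hac : a ≤ c) (hγ : ContinuousOn γ (Icc a c)) (ha : γ a ∈ A \ B) (hc : γ c ∈ B \ A) :
    ∃ y ∈ Ioo a c, infDist (γ y) A = infDist (γ y) B := by
  have hBa : 0 < infDist (γ a) B := (hB.notMem_iff_infDist_pos ⟨_, hc.1⟩).1 ha.2
  have hAc : 0 < infDist (γ c) A := (hA.notMem_iff_infDist_pos ⟨_, ha.1⟩).1 hc.2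
  have hg : ContinuousOn (fun y => infDist (γ y) B - infDist (γ y) A) (Icc a c) :=
    ((continuous_infDist_pt B).comp_continuousOn hγ).sub
      ((continuous_infDist_pt A).comp_continuousOn hγ)
  obtain ⟨y, hy, hy0⟩ := intermediate_value_Ioo' hac hg
    (show (0 : ℝ) ∈ Ioo _ _ by simp [infDist_zero_of_mem ha.1, infDist_zero_of_mem hc.1, hAc, hBa])
  exact ⟨y, hy, (sub_eq_zero.1 hy0).symm⟩

end InfDist

lemma mem_medialAxis_union {A B : Set (EuclideanSpace ℝ (Fin 2))} {w : EuclideanSpace ℝ (Fin 2)}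
    (hA : IsCompact A) (hB : IsCompact B) (hAne : A.Nonempty) (hBne : B.Nonempty)
    (heq : infDist w A = infDist w B) (hAB : ∀ p ∈ A ∩ B, infDist w A < dist w p) :
    w ∈ medialAxis (A ∪ B) := by
  have hunion : infDist w (A ∪ B) = infDist w A := infDist_union_of_le hAne heq.le
  obtain ⟨q₁, hq₁, hd₁⟩ := hA.exists_infDist_eq_dist hAne w
  obtain ⟨q₂, hq₂, hd₂⟩ := hB.exists_infDist_eq_dist hBne w
  refine ⟨fun hw => ?_, q₁, ⟨.inl hq₁, ?_⟩, q₂, ⟨.inr hq₂, ?_⟩, fun h => ?_⟩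
  · have h0 : infDist w A = 0 := hunion ▸ infDist_zero_of_mem hw
    have hwAB : w ∈ A ∩ B := ⟨(hA.isClosed.mem_iff_infDist_zero hAne).2 h0,
      (hB.isClosed.mem_iff_infDist_zero hBne).2 (heq ▸ h0)⟩
    simpa [h0] using hAB w hwAB
  · rw [hunion, hd₁, dist_comm, dist_eq_norm]
  · rw [hunion, heq, hd₂, dist_comm, dist_eq_norm]
  · exact (hAB q₂ ⟨h ▸ hq₁, hq₂⟩).ne (heq.trans hd₂)

lemma inter_graphs_subset {b : ℝ} {f₁ f₂ : ℝ → ℝ} (hlt : ∀ x ∈ Ioc (0 : ℝ) b, f₁ x < f₂ x) :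
    (fun x => pt x (f₁ x)) '' Icc 0 b ∩ (fun x => pt x (f₂ x)) '' Icc 0 b ⊆ {pt 0 (f₁ 0)} := by
  rintro _ ⟨⟨x, hx, rfl⟩, x', -, h⟩
  obtain ⟨rfl, h⟩ := pt_inj.1 h
  obtain rfl | hx0 := hx.1.eq_or_lt
  · rfl
  · exact absurd h (hlt x' ⟨hx0, hx.2⟩).ne'

lemma exists_mem_medialAxis_on_vertical_segment {b x₀ : ℝ} {f₁ f₂ : ℝ → ℝ}
    (hc₁ : ContinuousOn f₁ (Icc 0 b)) (hc₂ : ContinuousOn f₂ (Icc 0 b)) (h₁0 : f₁ 0 = 0)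
    (hlt : ∀ x ∈ Ioc (0 : ℝ) b, f₁ x < f₂ x) (hx₀ : x₀ ∈ Ioc 0 b) (hgap : f₂ x₀ - f₁ x₀ < x₀) :
    ∃ y₀ ∈ Ioo (f₁ x₀) (f₂ x₀), pt x₀ y₀ ∈
      medialAxis ((fun x => pt x (f₁ x)) '' Icc 0 b ∪ (fun x => pt x (f₂ x)) '' Icc 0 b) := by
  set A := (fun x => pt x (f₁ x)) '' Icc 0 b
  set B := (fun x => pt x (f₂ x)) '' Icc 0 b
  have hA : IsCompact A := isCompact_Icc.image_of_continuousOn (continuousOn_id.pt hc₁)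
  have hB : IsCompact B := isCompact_Icc.image_of_continuousOn (continuousOn_id.pt hc₂)
  have hAB : A ∩ B ⊆ {0} := by
    simpa only [h₁0, pt_zero] using inter_graphs_subset hlt
  have hx₀_notMem (y : ℝ) : pt x₀ y ∉ A ∩ B := fun h => by
    have h0 := hAB h
    rw [mem_singleton_iff, ← pt_zero, pt_inj] at h0
    exact hx₀.1.ne' h0.1
  have hfA : pt x₀ (f₁ x₀) ∈ A := mem_image_of_mem _ (Ioc_subset_Icc_self hx₀)
  have hfB : pt x₀ (f₂ x₀) ∈ B := mem_image_of_mem _ (Ioc_subset_Icc_self hx₀)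
  obtain ⟨y₀, hy₀, heq⟩ := exists_mem_Ioo_infDist_eq (γ := fun y => pt x₀ y) hA.isClosed
    hB.isClosed (hlt x₀ hx₀).le (continuousOn_const.pt continuousOn_id)
    ⟨hfA, fun h => hx₀_notMem _ ⟨hfA, h⟩⟩ ⟨hfB, fun h => hx₀_notMem _ ⟨h, hfB⟩⟩
  refine ⟨y₀, hy₀, mem_medialAxis_union hA hB ⟨_, hfA⟩ ⟨_, hfB⟩ heq fun p hp => ?_⟩
  rw [hAB hp]
  calc infDist (pt x₀ y₀) A ≤ dist (pt x₀ y₀) (pt x₀ (f₁ x₀)) := infDist_le_dist_of_mem hfA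
    _ = y₀ - f₁ x₀ := by rw [dist_pt_pt_same_fst, abs_of_pos (sub_pos.2 hy₀.1)]
    _ < x₀ := by linarith [hy₀.2]
    _ ≤ dist (pt x₀ y₀) 0 := by simpa [abs_of_pos hx₀.1] using abs_le_norm_pt x₀ y₀

theorem origin_mem_closure_medialAxis_of_tangent_graphs_general
    (b : ℝ) (hb : 0 < b) (f₁ f₂ : ℝ → ℝ)
    (hc₁ : ContinuousOn f₁ (Set.Icc 0 b)) (hc₂ : ContinuousOn f₂ (Set.Icc 0 b))
    (h₁0 : f₁ 0 = 0)
    (hlt : ∀ x ∈ Set.Ioc (0 : ℝ) b, f₁ x < f₂ x)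
    (htan : Tendsto (fun x => (f₂ x - f₁ x) / x) (nhdsWithin 0 (Set.Ioi 0)) (nhds 0)) :
    ∀ δ : ℝ, 0 < δ →
      ∃ w ∈ medialAxis
          ((fun x => pt x (f₁ x)) '' Set.Icc 0 b ∪ (fun x => pt x (f₂ x)) '' Set.Icc 0 b),
        ‖w‖ < δ ∧ ∃ x₀ y₀ : ℝ, 0 < x₀ ∧ x₀ < δ ∧ f₁ x₀ < y₀ ∧ y₀ < f₂ x₀ ∧ w = pt x₀ y₀ := by
  intro δ hδ
  have hγ₁ : Tendsto (fun x => pt x (f₁ x)) (𝓝[>] 0) (𝓝 0) := by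
    have := ((continuousOn_id.pt hc₁) 0 ⟨le_rfl, hb.le⟩).mono (Ioc_subset_Icc_self (b := b))
    rwa [ContinuousWithinAt, nhdsWithin_Ioc_eq_nhdsGT hb, id, h₁0, pt_zero] at this
  have hev : ∀ᶠ x in 𝓝[>] (0 : ℝ),
      x ∈ Ioc 0 b ∧ x < δ / 2 ∧ ‖pt x (f₁ x)‖ < δ / 2 ∧ f₂ x - f₁ x < x := by
    filter_upwards [Ioc_mem_nhdsGT hb, Ioo_mem_nhdsGT (half_pos hδ),
      (tendsto_norm_zero.comp hγ₁).eventually (gt_mem_nhds (half_pos hδ)),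
      htan.eventually (gt_mem_nhds one_pos)] with x hxb hxδ hγx hx
    exact ⟨hxb, hxδ.2, hγx, (div_lt_one hxb.1).1 hx⟩
  obtain ⟨x₀, hx₀, hx₀δ, hγx₀, hgap⟩ := hev.exists
  obtain ⟨y₀, hy₀, hw⟩ := exists_mem_medialAxis_on_vertical_segment hc₁ hc₂ h₁0 hlt hx₀ hgap
  refine ⟨pt x₀ y₀, hw, ?_, x₀, y₀, hx₀.1, by linarith, hy₀.1, hy₀.2, rfl⟩
  calc ‖pt x₀ y₀‖ ≤ dist (pt x₀ y₀) (pt x₀ (f₁ x₀)) + ‖pt x₀ (f₁ x₀)‖ := by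
        simpa only [dist_zero_right] using dist_triangle (pt x₀ y₀) (pt x₀ (f₁ x₀)) 0
    _ = y₀ - f₁ x₀ + ‖pt x₀ (f₁ x₀)‖ := by
        rw [dist_pt_pt_same_fst, abs_of_pos (sub_pos.2 hy₀.1)]
    _ < δ := by linarith [hy₀.2]

/-- If `X ⊆ ℝ²` is the union of the graphs over `[0, b]` of two continuous functions
`f₁ < f₂` (on `(0, b]`) vanishing at `0` and tangent to each other at the origin
(`(f₂ - f₁)(x) = o(x)`), then the origin lies in the closure of the medial axis of `X`;
moreover the medial axis points can be found between the two graphs, arbitrarily close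
to the origin. -/
theorem origin_mem_closure_medialAxis_of_tangent_graphs
    (b : ℝ) (hb : 0 < b) (f₁ f₂ : ℝ → ℝ)
    (hc₁ : ContinuousOn f₁ (Set.Icc 0 b)) (hc₂ : ContinuousOn f₂ (Set.Icc 0 b))
    (h₁0 : f₁ 0 = 0) (h₂0 : f₂ 0 = 0)
    (hlt : ∀ x ∈ Set.Ioc (0 : ℝ) b, f₁ x < f₂ x)
    (htan : Tendsto (fun x => (f₂ x - f₁ x) / x) (nhdsWithin 0 (Set.Ioi 0)) (nhds 0)) :
    ∀ δ : ℝ, 0 < δ →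
      ∃ w ∈ medialAxis
          ((fun x => pt x (f₁ x)) '' Set.Icc 0 b ∪ (fun x => pt x (f₂ x)) '' Set.Icc 0 b),
        ‖w‖ < δ ∧ ∃ x₀ y₀ : ℝ, 0 < x₀ ∧ x₀ < δ ∧ f₁ x₀ < y₀ ∧ y₀ < f₂ x₀ ∧ w = pt x₀ y₀ :=
  origin_mem_closure_medialAxis_of_tangent_graphs_general b hb f₁ f₂ hc₁ hc₂ h₁0 hlt htan
end
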